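/- arXiv:1602.03796 — 6 statements merged into one kernel-verified Lean document; each statement's English description precedes it below -/
import Mathlib

section
/- The regularized incomplete Beta function with fixed parameter sum is nonincreasing in its first parameter: for all reals a, a' with 0 < a ≤ a', every real s > a', and every t ∈ [0,1], it holds that I_t(a', s−a') ≤ I_t(a, s−a). -/
open MeasureTheory

/-- The Beta function `B(a,b) = ∫₀¹ x^(a-1) (1-x)^(b-1) dx`. -/
noncomputable def betaFn (a b : ℝ) : ℝ :=
  ∫ x in (0:ℝ)..1, x ^ (a - 1) * (1 - x) ^ (b - 1)

/-- The regularized incomplete Beta function `I_t(a,b)`. -/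
noncomputable def regIncBeta (a b t : ℝ) : ℝ :=
  (1 / betaFn a b) * ∫ x in (0:ℝ)..t, x ^ (a - 1) * (1 - x) ^ (b - 1)

lemma betaInt_integrable {a b : ℝ} (ha : 0 < a) (hb : 0 < b) :
    IntervalIntegrable (fun x : ℝ => x ^ (a - 1) * (1 - x) ^ (b - 1)) volume 0 1 := by
  have h1 : IntervalIntegrable (fun x : ℝ => x ^ (a - 1)) volume 0 (1/2) :=
    intervalIntegral.intervalIntegrable_rpow' (by linarith)
  have hc1 : ContinuousOn (fun x : ℝ => (1 - x) ^ (b - 1)) (Set.uIcc 0 (1/2)) := by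
    apply ContinuousOn.rpow_const (continuous_const.sub continuous_id).continuousOn
    intro x hx
    rw [Set.uIcc_of_le (by norm_num)] at hx
    left
    have : x ≤ 1/2 := hx.2
    intro h; simp at h; linarith
  have pieceA : IntervalIntegrable
      (fun x : ℝ => x ^ (a - 1) * (1 - x) ^ (b - 1)) volume 0 (1/2) :=
    h1.mul_continuousOn hc1
  have h2 : IntervalIntegrable (fun x : ℝ => x ^ (b - 1)) volume 0 (1/2) :=
    intervalIntegral.intervalIntegrable_rpow' (by linarith)
  have h2' : IntervalIntegrable (fun x : ℝ => (1 - x) ^ (b - 1)) volume (1/2) 1 := by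
    have := (h2.comp_sub_left 1).symm
    norm_num at this
    exact this
  have hc2 : ContinuousOn (fun x : ℝ => x ^ (a - 1)) (Set.uIcc (1/2) 1) := by
    apply ContinuousOn.rpow_const continuousOn_id
    intro x hx
    rw [Set.uIcc_of_le (by norm_num)] at hx
    left
    have hh : (1:ℝ)/2 ≤ x := hx.1
    intro h; simp only [id_eq] at h; subst h; norm_num at hh
  have pieceB : IntervalIntegrable
      (fun x : ℝ => x ^ (a - 1) * (1 - x) ^ (b - 1)) volume (1/2) 1 :=
    h2'.continuousOn_mul hc2
  exact pieceA.trans pieceB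

/-- The regularized incomplete Beta function with fixed parameter sum is
nonincreasing in its first parameter. -/
theorem stmt1 (a a' s : ℝ) (ha : 0 < a) (haa' : a ≤ a') (hs : a' < s)
    (t : ℝ) (ht : t ∈ Set.Icc (0:ℝ) 1) :
    regIncBeta a' (s - a') t ≤ regIncBeta a (s - a) t := by
  rcases eq_or_lt_of_le haa' with rfl | hlt
  · exact le_refl _
  have ha' : 0 < a' := ha.trans hlt
  have hb : 0 < s - a := by linarith
  have hb' : 0 < s - a' := by linarith
  have hp : 0 < a' - a := by linarith
  obtain ⟨ht0, ht1⟩ := ht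
  set F : ℝ → ℝ := fun x => x ^ (a - 1) * (1 - x) ^ (s - a - 1) with hF
  set G : ℝ → ℝ := fun x => x ^ (a' - 1) * (1 - x) ^ (s - a' - 1) with hG
  have hFint : IntervalIntegrable F volume 0 1 := betaInt_integrable ha hb
  have hGint : IntervalIntegrable G volume 0 1 := betaInt_integrable ha' hb'
  have hFpos : 0 < ∫ x in (0:ℝ)..1, F x := by
    apply intervalIntegral.intervalIntegral_pos_of_pos_on hFint _ one_pos
    intro x hx
    exact mul_pos (Real.rpow_pos_of_pos hx.1 _)
      (Real.rpow_pos_of_pos (by linarith [hx.2]) _)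
  have hGpos : 0 < ∫ x in (0:ℝ)..1, G x := by
    apply intervalIntegral.intervalIntegral_pos_of_pos_on hGint _ one_pos
    intro x hx
    exact mul_pos (Real.rpow_pos_of_pos hx.1 _)
      (Real.rpow_pos_of_pos (by linarith [hx.2]) _)
  have goal_eq : (regIncBeta a' (s - a') t ≤ regIncBeta a (s - a) t) =
      ((1 / ∫ x in (0:ℝ)..1, G x) * (∫ x in (0:ℝ)..t, G x) ≤
        (1 / ∫ x in (0:ℝ)..1, F x) * (∫ x in (0:ℝ)..t, F x)) := by
    rw [regIncBeta, regIncBeta, betaFn, betaFn, hF, hG]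
  rw [goal_eq]
  rcases eq_or_lt_of_le ht0 with rfl | ht0
  · simp
  rcases eq_or_lt_of_le ht1 with rfl | ht1
  · rw [one_div_mul_eq_div, one_div_mul_eq_div, div_self hFpos.ne', div_self hGpos.ne']
  -- main case 0 < t < 1
  have h1t : 0 < 1 - t := by linarith
  set c : ℝ := (t / (1 - t)) ^ (a' - a) with hc
  have hcpos : 0 < c := Real.rpow_pos_of_pos (div_pos ht0 h1t) _
  have key : ∀ x : ℝ, 0 < x → x < 1 → G x = F x * (x / (1 - x)) ^ (a' - a) := by
    intro x hx0 hx1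
    have h1x : (0:ℝ) < 1 - x := by linarith
    show x ^ (a' - 1) * (1 - x) ^ (s - a' - 1) =
      x ^ (a - 1) * (1 - x) ^ (s - a - 1) * (x / (1 - x)) ^ (a' - a)
    rw [Real.div_rpow hx0.le h1x.le,
      show a' - 1 = (a - 1) + (a' - a) by ring, Real.rpow_add hx0,
      show s - a' - 1 = (s - a - 1) - (a' - a) by ring, Real.rpow_sub h1x]
    field_simp
  have hFnonneg : ∀ x : ℝ, 0 ≤ x → x ≤ 1 → 0 ≤ F x := fun x hx0 hx1 =>
    mul_nonneg (Real.rpow_nonneg hx0 _) (Real.rpow_nonneg (by linarith) _)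
  have hGnonneg : ∀ x : ℝ, 0 ≤ x → x ≤ 1 → 0 ≤ G x := fun x hx0 hx1 =>
    mul_nonneg (Real.rpow_nonneg hx0 _) (Real.rpow_nonneg (by linarith) _)
  have hsub1 : Set.uIcc (0:ℝ) t ⊆ Set.uIcc (0:ℝ) 1 := by
    rw [Set.uIcc_of_le ht0.le, Set.uIcc_of_le zero_le_one]
    exact Set.Icc_subset_Icc le_rfl ht1.le
  have hsub2 : Set.uIcc t 1 ⊆ Set.uIcc (0:ℝ) 1 := by
    rw [Set.uIcc_of_le ht1.le, Set.uIcc_of_le zero_le_one]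
    exact Set.Icc_subset_Icc ht0.le le_rfl
  have hFt : IntervalIntegrable F volume 0 t := hFint.mono_set hsub1
  have hFr : IntervalIntegrable F volume t 1 := hFint.mono_set hsub2
  have hGt : IntervalIntegrable G volume 0 t := hGint.mono_set hsub1
  have hGr : IntervalIntegrable G volume t 1 := hGint.mono_set hsub2
  -- pointwise bounds
  have hle : ∀ x ∈ Set.Ioo (0:ℝ) t, G x ≤ c * F x := by
    intro x hx
    have hx0 := hx.1
    have hxt := hx.2
    have hx1 : x < 1 := lt_trans hxt ht1
    have h1x : (0:ℝ) < 1 - x := by linarith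
    rw [key x hx0 hx1]
    have hq : x / (1 - x) ≤ t / (1 - t) :=
      div_le_div₀ (by positivity) hxt.le h1t (by linarith)
    have : (x / (1 - x)) ^ (a' - a) ≤ c :=
      Real.rpow_le_rpow (by positivity) hq hp.le
    calc F x * (x / (1 - x)) ^ (a' - a) ≤ F x * c :=
          mul_le_mul_of_nonneg_left this (hFnonneg x hx0.le hx1.le)
      _ = c * F x := mul_comm _ _
  have hge : ∀ x ∈ Set.Ioo t (1:ℝ), c * F x ≤ G x := by
    intro x hx
    have htx : t < x := hx.1
    have hx0 : 0 < x := lt_trans ht0 htx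
    have hx1 : x < 1 := hx.2
    have h1x : (0:ℝ) < 1 - x := by linarith
    rw [key x hx0 hx1]
    have hq : t / (1 - t) ≤ x / (1 - x) :=
      div_le_div₀ (by positivity) htx.le h1x (by linarith [htx])
    have : c ≤ (x / (1 - x)) ^ (a' - a) :=
      Real.rpow_le_rpow (by positivity) hq hp.le
    calc c * F x = F x * c := mul_comm _ _
      _ ≤ F x * (x / (1 - x)) ^ (a' - a) :=
          mul_le_mul_of_nonneg_left this (hFnonneg x hx0.le hx1.le)
  -- integral inequalities
  have I1 : (∫ x in (0:ℝ)..t, G x) ≤ c * ∫ x in (0:ℝ)..t, F x := by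
    rw [← intervalIntegral.integral_const_mul, intervalIntegral.integral_of_le ht0.le,
      intervalIntegral.integral_of_le ht0.le,
      MeasureTheory.integral_Ioc_eq_integral_Ioo, MeasureTheory.integral_Ioc_eq_integral_Ioo]
    apply MeasureTheory.setIntegral_mono_on
    · exact ((intervalIntegrable_iff_integrableOn_Ioc_of_le ht0.le).mp hGt).mono_set
        Set.Ioo_subset_Ioc_self
    · exact (((intervalIntegrable_iff_integrableOn_Ioc_of_le ht0.le).mp hFt).mono_set
        Set.Ioo_subset_Ioc_self).const_mul c
    · exact measurableSet_Ioo
    · exact hle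
  have I2 : c * (∫ x in t..(1:ℝ), F x) ≤ ∫ x in t..(1:ℝ), G x := by
    rw [← intervalIntegral.integral_const_mul, intervalIntegral.integral_of_le ht1.le,
      intervalIntegral.integral_of_le ht1.le,
      MeasureTheory.integral_Ioc_eq_integral_Ioo, MeasureTheory.integral_Ioc_eq_integral_Ioo]
    apply MeasureTheory.setIntegral_mono_on
    · exact (((intervalIntegrable_iff_integrableOn_Ioc_of_le ht1.le).mp hFr).mono_set
        Set.Ioo_subset_Ioc_self).const_mul c
    · exact ((intervalIntegrable_iff_integrableOn_Ioc_of_le ht1.le).mp hGr).mono_set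
        Set.Ioo_subset_Ioc_self
    · exact measurableSet_Ioo
    · exact hge
  -- nonnegativity of the pieces
  have hFt0 : 0 ≤ ∫ x in (0:ℝ)..t, F x :=
    intervalIntegral.integral_nonneg ht0.le
      (fun x hx => hFnonneg x hx.1 (le_trans hx.2 ht1.le))
  have hFr0 : 0 ≤ ∫ x in t..(1:ℝ), F x :=
    intervalIntegral.integral_nonneg ht1.le
      (fun x hx => hFnonneg x (le_trans ht0.le hx.1) hx.2)
  have hGt0 : 0 ≤ ∫ x in (0:ℝ)..t, G x :=
    intervalIntegral.integral_nonneg ht0.le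
      (fun x hx => hGnonneg x hx.1 (le_trans hx.2 ht1.le))
  -- splitting
  have hFsplit : (∫ x in (0:ℝ)..1, F x) = (∫ x in (0:ℝ)..t, F x) + ∫ x in t..(1:ℝ), F x :=
    (intervalIntegral.integral_add_adjacent_intervals hFt hFr).symm
  have hGsplit : (∫ x in (0:ℝ)..1, G x) = (∫ x in (0:ℝ)..t, G x) + ∫ x in t..(1:ℝ), G x :=
    (intervalIntegral.integral_add_adjacent_intervals hGt hGr).symm
  rw [one_div_mul_eq_div, one_div_mul_eq_div, div_le_div_iff₀ hGpos hFpos]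
  rw [hFsplit, hGsplit]
  nlinarith [mul_le_mul_of_nonneg_right I1 hFr0, mul_le_mul_of_nonneg_left I2 hFt0,
    mul_nonneg hGt0 hFt0]
end

section
/- (Corollary 1: asymptotics of the expected-running-time quantity H_{1,ε'}.) Let n, N be integers with 1 ≤ n ≤ N and let ε' ∈ (0,1). Then lim_{N_o→∞} ∫_0^1 ( ∑_{i=0}^{⌊ε' N_o⌋} C(N_o,i) t^i (1−t)^{N_o−i} ) · t^{n−1}(1−t)^{N−n} / B(n, N+1−n) dt = I_{ε'}(n, N+1−n), where the limit is over integers N_o → ∞. Equivalently, H_{1,ε'}(N,N_o) := 1 − ∫_0^1 ( ∑_{i=0}^{⌊ε' N_o⌋} C(N_o,i) t^i (1−t)^{N_o−i} ) t^{n−1}(1−t)^{N−n}/B(n,N+1−n) dt converges to β_{ε'}(N) := 1 − I_{ε'}(n, N+1−n) as N_o → ∞. -/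
open MeasureTheory Filter

/-- The binomial CDF-like sum. -/
noncomputable def binCdf (No k : ℕ) (t : ℝ) : ℝ :=
  ∑ i ∈ Finset.range (k + 1), (No.choose i : ℝ) * t ^ i * (1 - t) ^ (No - i)

lemma binFull_eq_one (No : ℕ) (t : ℝ) : binCdf No No t = 1 := by
  unfold binCdf
  have h := add_pow t (1 - t) No
  simp only [add_sub_cancel, one_pow] at h
  calc ∑ i ∈ Finset.range (No + 1), (No.choose i : ℝ) * t ^ i * (1 - t) ^ (No - i)
      = ∑ i ∈ Finset.range (No + 1), t ^ i * (1 - t) ^ (No - i) * (No.choose i : ℝ) :=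
        Finset.sum_congr rfl fun i _ => by ring
    _ = 1 := h.symm

lemma binCdf_nonneg (No k : ℕ) (t : ℝ) (ht0 : 0 ≤ t) (ht1 : t ≤ 1) : 0 ≤ binCdf No k t :=
  Finset.sum_nonneg fun i _ => by
    have h1 : (0:ℝ) ≤ 1 - t := by linarith
    positivity

lemma binCdf_le_one (No k : ℕ) (t : ℝ) (ht0 : 0 ≤ t) (ht1 : t ≤ 1) (hk : k ≤ No) :
    binCdf No k t ≤ 1 := by
  rw [← binFull_eq_one No t]
  apply Finset.sum_le_sum_of_subset_of_nonneg
  · exact Finset.range_subset_range.2 (by omega)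
  · intro i _ _
    have h1 : (0:ℝ) ≤ 1 - t := by linarith
    positivity

/-- Chernoff-type bound for the head of the binomial sum, `0 < θ ≤ 1`. -/
lemma head_bound (No k : ℕ) (t θ : ℝ) (ht0 : 0 ≤ t) (ht1 : t ≤ 1)
    (hθ0 : 0 < θ) (hθ1 : θ ≤ 1) (hk : k ≤ No) :
    binCdf No k t ≤ (1/θ) ^ k * (θ * t + (1 - t)) ^ No := by
  have h1t : (0:ℝ) ≤ 1 - t := by linarith
  have step1 : binCdf No k t ≤
      ∑ i ∈ Finset.range (k + 1),
        (1/θ) ^ k * ((No.choose i : ℝ) * (θ * t) ^ i * (1 - t) ^ (No - i)) := by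
    apply Finset.sum_le_sum
    intro i hi
    have hik : i ≤ k := by simpa [Nat.lt_succ_iff] using Finset.mem_range.mp hi
    have hθik : θ ^ k ≤ θ ^ i := pow_le_pow_of_le_one hθ0.le hθ1 hik
    have hkey : (1:ℝ) ≤ (1/θ) ^ k * θ ^ i := by
      rw [one_div, inv_pow, ← div_eq_inv_mul, le_div_iff₀ (pow_pos hθ0 k)]
      simpa using hθik
    have hnn : (0:ℝ) ≤ (No.choose i : ℝ) * t ^ i * (1 - t) ^ (No - i) := by positivity
    calc (No.choose i : ℝ) * t ^ i * (1 - t) ^ (No - i)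
        ≤ ((1/θ) ^ k * θ ^ i) * ((No.choose i : ℝ) * t ^ i * (1 - t) ^ (No - i)) :=
          le_mul_of_one_le_left hnn hkey
      _ = (1/θ) ^ k * ((No.choose i : ℝ) * (θ * t) ^ i * (1 - t) ^ (No - i)) := by
          rw [mul_pow]; ring
  refine step1.trans ?_
  rw [← Finset.mul_sum]
  apply mul_le_mul_of_nonneg_left _ (by positivity)
  have hθt : (0:ℝ) ≤ θ * t := by positivity
  have hsub : ∑ i ∈ Finset.range (k + 1),
      (No.choose i : ℝ) * (θ * t) ^ i * (1 - t) ^ (No - i) ≤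
      ∑ i ∈ Finset.range (No + 1),
      (No.choose i : ℝ) * (θ * t) ^ i * (1 - t) ^ (No - i) := by
    apply Finset.sum_le_sum_of_subset_of_nonneg (Finset.range_subset_range.2 (by omega))
    intro i _ _; positivity
  refine hsub.trans_eq ?_
  have h := add_pow (θ * t) (1 - t) No
  rw [h]
  exact Finset.sum_congr rfl fun i _ => by ring

/-- Chernoff-type bound for the tail of the binomial sum, `1 ≤ θ`. -/
lemma tail_bound (No k : ℕ) (t θ : ℝ) (ht0 : 0 ≤ t) (ht1 : t ≤ 1)
    (hθ1 : 1 ≤ θ) (hk : k ≤ No) :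
    ∑ i ∈ Finset.Ico (k + 1) (No + 1), (No.choose i : ℝ) * t ^ i * (1 - t) ^ (No - i)
      ≤ (1/θ) ^ (k + 1) * (θ * t + (1 - t)) ^ No := by
  have hθ0 : (0:ℝ) < θ := lt_of_lt_of_le one_pos hθ1
  have h1t : (0:ℝ) ≤ 1 - t := by linarith
  have step1 : ∑ i ∈ Finset.Ico (k + 1) (No + 1),
      (No.choose i : ℝ) * t ^ i * (1 - t) ^ (No - i) ≤
      ∑ i ∈ Finset.Ico (k + 1) (No + 1),
        (1/θ) ^ (k + 1) * ((No.choose i : ℝ) * (θ * t) ^ i * (1 - t) ^ (No - i)) := by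
    apply Finset.sum_le_sum
    intro i hi
    have hik : k + 1 ≤ i := (Finset.mem_Ico.mp hi).1
    have hθik : θ ^ (k + 1) ≤ θ ^ i := pow_le_pow_right₀ hθ1 hik
    have hkey : (1:ℝ) ≤ (1/θ) ^ (k + 1) * θ ^ i := by
      rw [one_div, inv_pow, ← div_eq_inv_mul, le_div_iff₀ (pow_pos hθ0 (k + 1))]
      simpa using hθik
    have hnn : (0:ℝ) ≤ (No.choose i : ℝ) * t ^ i * (1 - t) ^ (No - i) := by positivity
    calc (No.choose i : ℝ) * t ^ i * (1 - t) ^ (No - i)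
        ≤ ((1/θ) ^ (k + 1) * θ ^ i) * ((No.choose i : ℝ) * t ^ i * (1 - t) ^ (No - i)) :=
          le_mul_of_one_le_left hnn hkey
      _ = (1/θ) ^ (k + 1) * ((No.choose i : ℝ) * (θ * t) ^ i * (1 - t) ^ (No - i)) := by
          rw [mul_pow]; ring
  refine step1.trans ?_
  rw [← Finset.mul_sum]
  apply mul_le_mul_of_nonneg_left _ (by positivity)
  have hθt : (0:ℝ) ≤ θ * t := by positivity
  have hsub : ∑ i ∈ Finset.Ico (k + 1) (No + 1),
      (No.choose i : ℝ) * (θ * t) ^ i * (1 - t) ^ (No - i) ≤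
      ∑ i ∈ Finset.range (No + 1),
      (No.choose i : ℝ) * (θ * t) ^ i * (1 - t) ^ (No - i) := by
    apply Finset.sum_le_sum_of_subset_of_nonneg
    · rw [Finset.range_eq_Ico]; exact Finset.Ico_subset_Ico (by omega) le_rfl
    · intro i _ _; positivity
  refine hsub.trans_eq ?_
  have h := add_pow (θ * t) (1 - t) No
  rw [h]
  exact Finset.sum_congr rfl fun i _ => by ring

/-- For `ε' < t ≤ 1`, the binomial CDF at `⌊ε'·No⌋` tends to 0. -/
lemma binCdf_tendsto_zero (ε' t : ℝ) (hε0 : 0 < ε') (hεt : ε' < t) (ht1 : t ≤ 1) :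
    Tendsto (fun No : ℕ => binCdf No ⌊ε' * No⌋₊ t) atTop (nhds 0) := by
  have ht0 : 0 < t := hε0.trans hεt
  set θ : ℝ := (ε' / t + 1) / 2 with hθdef
  have hq1 : ε' / t < 1 := (div_lt_one ht0).2 hεt
  have hq0 : 0 < ε' / t := div_pos hε0 ht0
  have hθ0 : 0 < θ := by rw [hθdef]; linarith
  have hθ1 : θ < 1 := by rw [hθdef]; linarith
  have hqθ : ε' / t < θ := by rw [hθdef]; linarith
  have hεθt : ε' / θ < t := by
    rw [div_lt_iff₀ hθ0]
    calc ε' = (ε' / t) * t := by field_simp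
      _ < θ * t := by exact mul_lt_mul_of_pos_right hqθ ht0
      _ = t * θ := mul_comm _ _
  set ρ : ℝ := (1/θ) ^ ε' * (θ * t + (1 - t)) with hρdef
  have hθt1 : 0 ≤ θ * t + (1 - t) := by nlinarith
  have hρ0 : 0 ≤ ρ := mul_nonneg (Real.rpow_nonneg (by positivity) _) hθt1
  have hρ1 : ρ < 1 := by
    have h1 : (1/θ) ^ ε' ≤ Real.exp ((1/θ - 1) * ε') := by
      rw [Real.rpow_def_of_pos (by positivity)]
      apply Real.exp_le_exp.2
      exact mul_le_mul_of_nonneg_right (Real.log_le_sub_one_of_pos (by positivity)) hε0.le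
    have h2 : θ * t + (1 - t) ≤ Real.exp (t * (θ - 1)) := by
      have := Real.add_one_le_exp (t * (θ - 1))
      nlinarith [this]
    have h3 : ρ ≤ Real.exp ((1/θ - 1) * ε' + t * (θ - 1)) := by
      rw [Real.exp_add]
      exact mul_le_mul h1 h2 hθt1 (Real.exp_nonneg _)
    have h4 : (1/θ - 1) * ε' + t * (θ - 1) < 0 := by
      have he : (1/θ - 1) * ε' = (1 - θ) * (ε' / θ) := by field_simp
      rw [he]
      nlinarith [hεθt, hθ1, hθ0]
    calc ρ ≤ Real.exp ((1/θ - 1) * ε' + t * (θ - 1)) := h3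
      _ < Real.exp 0 := Real.exp_lt_exp.2 h4
      _ = 1 := Real.exp_zero
  have hbound : ∀ No : ℕ, binCdf No ⌊ε' * No⌋₊ t ≤ ρ ^ No := by
    intro No
    have hk : ⌊ε' * No⌋₊ ≤ No := by
      have : ε' * No ≤ (No : ℝ) := by nlinarith [Nat.cast_nonneg (α := ℝ) No]
      calc ⌊ε' * No⌋₊ ≤ ⌊(No : ℝ)⌋₊ := Nat.floor_le_floor this
        _ = No := Nat.floor_natCast No
    have h1 := head_bound No ⌊ε' * No⌋₊ t θ ht0.le ht1 hθ0 hθ1.le hk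
    refine h1.trans ?_
    have h1θ : (1:ℝ) ≤ 1/θ := (one_le_div hθ0).2 hθ1.le
    have h2 : ((1:ℝ)/θ) ^ ⌊ε' * No⌋₊ ≤ (1/θ) ^ (ε' * No) := by
      rw [← Real.rpow_natCast (1/θ) ⌊ε' * No⌋₊]
      exact Real.rpow_le_rpow_of_exponent_le h1θ (Nat.floor_le (by positivity))
    have h3 : ((1:ℝ)/θ) ^ (ε' * (No:ℝ)) = ((1/θ) ^ ε') ^ No := by
      rw [Real.rpow_mul (by positivity), Real.rpow_natCast]
    calc (1/θ) ^ ⌊ε' * No⌋₊ * (θ * t + (1 - t)) ^ No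
        ≤ (1/θ) ^ (ε' * (No:ℝ)) * (θ * t + (1 - t)) ^ No :=
          mul_le_mul_of_nonneg_right h2 (pow_nonneg hθt1 No)
      _ = ρ ^ No := by rw [h3, hρdef, mul_pow]
  exact squeeze_zero (fun No => binCdf_nonneg _ _ _ ht0.le ht1) hbound
    (tendsto_pow_atTop_nhds_zero_of_lt_one hρ0 hρ1)

/-- For `0 < t < ε' < 1`, the binomial CDF at `⌊ε'·No⌋` tends to 1. -/
lemma binCdf_tendsto_one (ε' t : ℝ) (ht0 : 0 < t) (htε : t < ε') (hε1 : ε' < 1) :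
    Tendsto (fun No : ℕ => binCdf No ⌊ε' * No⌋₊ t) atTop (nhds 1) := by
  have hε0 : 0 < ε' := ht0.trans htε
  have ht1 : t < 1 := htε.trans hε1
  set θ : ℝ := (ε' / t + 1) / 2 with hθdef
  have hq1 : 1 < ε' / t := (one_lt_div ht0).2 htε
  have hθ1 : 1 < θ := by rw [hθdef]; linarith
  have hθ0 : 0 < θ := lt_trans one_pos hθ1
  have hθq : θ < ε' / t := by rw [hθdef]; linarith
  have htεθ : t < ε' / θ := by
    rw [lt_div_iff₀ hθ0]
    calc t * θ < t * (ε' / t) := mul_lt_mul_of_pos_left hθq ht0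
      _ = ε' := by field_simp
  set ρ : ℝ := (1/θ) ^ ε' * (θ * t + (1 - t)) with hρdef
  have hθt1 : 0 ≤ θ * t + (1 - t) := by nlinarith
  have hρ0 : 0 ≤ ρ := mul_nonneg (Real.rpow_nonneg (by positivity) _) hθt1
  have hρ1 : ρ < 1 := by
    have h1 : (1/θ) ^ ε' ≤ Real.exp ((1/θ - 1) * ε') := by
      rw [Real.rpow_def_of_pos (by positivity)]
      apply Real.exp_le_exp.2
      exact mul_le_mul_of_nonneg_right (Real.log_le_sub_one_of_pos (by positivity)) hε0.le
    have h2 : θ * t + (1 - t) ≤ Real.exp (t * (θ - 1)) := by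
      have := Real.add_one_le_exp (t * (θ - 1))
      nlinarith [this]
    have h3 : ρ ≤ Real.exp ((1/θ - 1) * ε' + t * (θ - 1)) := by
      rw [Real.exp_add]
      exact mul_le_mul h1 h2 hθt1 (Real.exp_nonneg _)
    have h4 : (1/θ - 1) * ε' + t * (θ - 1) < 0 := by
      have he : (1/θ - 1) * ε' = (1 - θ) * (ε' / θ) := by field_simp
      rw [he]
      nlinarith [htεθ, hθ1, hθ0]
    calc ρ ≤ Real.exp ((1/θ - 1) * ε' + t * (θ - 1)) := h3
      _ < Real.exp 0 := Real.exp_lt_exp.2 h4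
      _ = 1 := Real.exp_zero
  -- 1 - binCdf = tail sum
  have hsplit : ∀ No : ℕ, ⌊ε' * No⌋₊ ≤ No →
      1 - binCdf No ⌊ε' * No⌋₊ t =
        ∑ i ∈ Finset.Ico (⌊ε' * No⌋₊ + 1) (No + 1),
          (No.choose i : ℝ) * t ^ i * (1 - t) ^ (No - i) := by
    intro No hk
    have h := binFull_eq_one No t
    have hadd : binCdf No No t = binCdf No ⌊ε' * No⌋₊ t +
        ∑ i ∈ Finset.Ico (⌊ε' * No⌋₊ + 1) (No + 1),
          (No.choose i : ℝ) * t ^ i * (1 - t) ^ (No - i) := by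
      unfold binCdf
      rw [Finset.range_eq_Ico, Finset.range_eq_Ico]
      exact (Finset.sum_Ico_consecutive (fun i => (No.choose i : ℝ) * t ^ i * (1 - t) ^ (No - i)) (Nat.zero_le (⌊ε' * No⌋₊ + 1))
          (by omega : ⌊ε' * No⌋₊ + 1 ≤ No + 1)).symm
    rw [hadd] at h
    linarith
  have hkNo : ∀ No : ℕ, ⌊ε' * No⌋₊ ≤ No := by
    intro No
    have : ε' * No ≤ (No : ℝ) := by nlinarith [Nat.cast_nonneg (α := ℝ) No]
    calc ⌊ε' * No⌋₊ ≤ ⌊(No : ℝ)⌋₊ := Nat.floor_le_floor this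
      _ = No := Nat.floor_natCast No
  have htail : Tendsto (fun No : ℕ => 1 - binCdf No ⌊ε' * No⌋₊ t) atTop (nhds 0) := by
    have hbound : ∀ No : ℕ, 1 - binCdf No ⌊ε' * No⌋₊ t ≤ ρ ^ No := by
      intro No
      rw [hsplit No (hkNo No)]
      have h1 := tail_bound No ⌊ε' * No⌋₊ t θ ht0.le ht1.le hθ1.le (hkNo No)
      refine h1.trans ?_
      have h1θ0 : (0:ℝ) < 1/θ := by positivity
      have h1θ : (1:ℝ)/θ ≤ 1 := by
        rw [div_le_one hθ0]; exact hθ1.le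
      have h2 : ((1:ℝ)/θ) ^ (⌊ε' * No⌋₊ + 1) ≤ (1/θ) ^ (ε' * No) := by
        rw [← Real.rpow_natCast (1/θ) (⌊ε' * No⌋₊ + 1)]
        apply Real.rpow_le_rpow_of_exponent_ge h1θ0 h1θ
        push_cast
        exact (Nat.lt_floor_add_one (ε' * No)).le
      have h3 : ((1:ℝ)/θ) ^ (ε' * (No:ℝ)) = ((1/θ) ^ ε') ^ No := by
        rw [Real.rpow_mul (by positivity), Real.rpow_natCast]
      calc (1/θ) ^ (⌊ε' * No⌋₊ + 1) * (θ * t + (1 - t)) ^ No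
          ≤ (1/θ) ^ (ε' * (No:ℝ)) * (θ * t + (1 - t)) ^ No :=
            mul_le_mul_of_nonneg_right h2 (pow_nonneg hθt1 No)
        _ = ρ ^ No := by rw [h3, hρdef, mul_pow]
    have hnn : ∀ No : ℕ, 0 ≤ 1 - binCdf No ⌊ε' * No⌋₊ t := by
      intro No
      have := binCdf_le_one No ⌊ε' * No⌋₊ t ht0.le ht1.le (hkNo No)
      linarith
    exact squeeze_zero hnn hbound (tendsto_pow_atTop_nhds_zero_of_lt_one hρ0 hρ1)
  have := (tendsto_const_nhds (x := (1:ℝ)) (f := atTop)).sub htail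
  simpa using this

/-- Corollary 1: `1 - H_{1,ε'}(N,N_o) → 1 - β_{ε'}(N) = I_{ε'}(n, N+1-n)` as `N_o → ∞`. -/
theorem stmt3 (n N : ℕ) (hn : 1 ≤ n) (hnN : n ≤ N) (ε' : ℝ) (hε' : ε' ∈ Set.Ioo (0:ℝ) 1) :
    Tendsto
      (fun No : ℕ => ∫ t in (0:ℝ)..1,
        (∑ i ∈ Finset.range (⌊ε' * No⌋₊ + 1),
          (No.choose i : ℝ) * t ^ i * (1 - t) ^ (No - i))
        * (t ^ ((n:ℝ) - 1) * (1 - t) ^ ((N:ℝ) - n) / betaFn n ((N:ℝ) + 1 - n)))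
      atTop (nhds (regIncBeta n ((N:ℝ) + 1 - n) ε')) := by
  obtain ⟨hε0, hε1⟩ := hε'
  set m : ℕ := n - 1 with hm
  set M : ℕ := N - n with hM
  have hmn : ((n:ℝ) - 1) = ((m:ℕ) : ℝ) := by
    rw [hm]; push_cast [Nat.cast_sub hn]; ring
  have hMn : ((N:ℝ) - (n:ℝ)) = ((M:ℕ) : ℝ) := by
    rw [hM]; push_cast [Nat.cast_sub hnN]; ring
  have hcont : Continuous fun x : ℝ => x ^ m * (1 - x) ^ M := by continuity
  set B : ℝ := ∫ x in (0:ℝ)..1, x ^ m * (1 - x) ^ M with hBdef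
  have hB : betaFn n ((N:ℝ) + 1 - n) = B := by
    rw [hBdef, betaFn]
    refine intervalIntegral.integral_congr fun x _ => ?_
    rw [show ((N:ℝ) + 1 - n - 1) = ((N:ℝ) - n) by ring, hmn, hMn,
      Real.rpow_natCast, Real.rpow_natCast]
  have hBpos : 0 < B := by
    rw [hBdef]
    apply intervalIntegral.intervalIntegral_pos_of_pos_on
      (hcont.intervalIntegrable 0 1)
    · intro x hx
      have h1 : 0 < x := hx.1
      have h2 : 0 < 1 - x := by linarith [hx.2]
      positivity
    · exact one_pos
  have hreg : regIncBeta n ((N:ℝ) + 1 - n) ε' =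
      (1 / B) * ∫ x in (0:ℝ)..ε', x ^ m * (1 - x) ^ M := by
    rw [regIncBeta, hB]
    congr 1
    refine intervalIntegral.integral_congr fun x _ => ?_
    rw [show ((N:ℝ) + 1 - n - 1) = ((N:ℝ) - n) by ring, hmn, hMn,
      Real.rpow_natCast, Real.rpow_natCast]
  -- rewrite the goal in terms of natural powers
  simp only [hmn, hMn, Real.rpow_natCast, hB, hreg]
  set f₀ : ℝ → ℝ := fun t => t ^ m * (1 - t) ^ M / B with hf₀
  set f : ℝ → ℝ := Set.indicator (Set.Iic ε') f₀ with hf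
  have hf₀cont : Continuous f₀ := hcont.div_const B
  have hf₀int : ∀ a b : ℝ, IntervalIntegrable f₀ volume a b := fun a b =>
    hf₀cont.intervalIntegrable a b
  have hfint : ∀ a b : ℝ, IntervalIntegrable f volume a b := by
    intro a b
    constructor
    · exact ((hf₀int a b).1).indicator measurableSet_Iic
    · exact ((hf₀int a b).2).indicator measurableSet_Iic
  have hval : (∫ t in (0:ℝ)..1, f t) = (1 / B) * ∫ x in (0:ℝ)..ε', x ^ m * (1 - x) ^ M := by
    have hsplit : (∫ t in (0:ℝ)..ε', f t) + (∫ t in ε'..1, f t) = ∫ t in (0:ℝ)..1, f t :=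
      intervalIntegral.integral_add_adjacent_intervals (hfint 0 ε') (hfint ε' 1)
    have h1 : (∫ t in (0:ℝ)..ε', f t) = ∫ t in (0:ℝ)..ε', f₀ t := by
      refine intervalIntegral.integral_congr fun x hx => ?_
      rw [Set.uIcc_of_le hε0.le] at hx
      exact Set.indicator_of_mem (Set.mem_Iic.2 hx.2) f₀
    have h2 : (∫ t in ε'..1, f t) = 0 := by
      rw [intervalIntegral.integral_of_le hε1.le]
      apply setIntegral_eq_zero_of_forall_eq_zero
      intro x hx
      exact Set.indicator_of_notMem (by simp [Set.mem_Iic]; exact hx.1) f₀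
    rw [← hsplit, h1, h2, add_zero, hf₀]
    rw [intervalIntegral.integral_div]
    ring
  rw [← hval]
  -- dominated convergence
  apply intervalIntegral.tendsto_integral_filter_of_dominated_convergence
    (fun t => |f₀ t|)
  · exact Eventually.of_forall fun No => (Continuous.aestronglyMeasurable (by
      apply Continuous.mul
      · apply continuous_finset_sum
        intro i _
        continuity
      · exact hf₀cont))
  · refine Eventually.of_forall fun No => ?_
    refine Eventually.of_forall fun x hx => ?_
    rw [Set.uIoc_of_le (by norm_num : (0:ℝ) ≤ 1)] at hx
    have hx0 : 0 < x := hx.1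
    have hx1 : x ≤ 1 := hx.2
    have hkNo : ⌊ε' * No⌋₊ ≤ No := by
      have : ε' * No ≤ (No : ℝ) := by nlinarith [Nat.cast_nonneg (α := ℝ) No]
      calc ⌊ε' * No⌋₊ ≤ ⌊(No : ℝ)⌋₊ := Nat.floor_le_floor this
        _ = No := Nat.floor_natCast No
    have hS0 : 0 ≤ binCdf No ⌊ε' * No⌋₊ x := binCdf_nonneg _ _ _ hx0.le hx1
    have hS1 : binCdf No ⌊ε' * No⌋₊ x ≤ 1 := binCdf_le_one _ _ _ hx0.le hx1 hkNo
    rw [Real.norm_eq_abs, abs_mul]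
    calc |binCdf No ⌊ε' * No⌋₊ x| * |f₀ x| ≤ 1 * |f₀ x| := by
          apply mul_le_mul_of_nonneg_right _ (abs_nonneg _)
          rw [abs_of_nonneg hS0]; exact hS1
      _ = |f₀ x| := one_mul _
  · exact (hf₀cont.abs).intervalIntegrable 0 1
  · have hae : ∀ᵐ x : ℝ, x ≠ ε' := by
      have h0 : (volume : Measure ℝ) {ε'} = 0 := measure_singleton ε'
      rw [ae_iff]
      convert h0 using 2
      ext x; simp
    filter_upwards [hae] with x hx hmem
    rw [Set.uIoc_of_le (by norm_num : (0:ℝ) ≤ 1)] at hmem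
    have hx0 : 0 < x := hmem.1
    have hx1 : x ≤ 1 := hmem.2
    rcases lt_or_gt_of_ne hx with hlt | hgt
    · -- x < ε' : limit is f₀ x
      have hfx : f x = f₀ x := Set.indicator_of_mem (Set.mem_Iic.2 hlt.le) f₀
      rw [hfx]
      have := (binCdf_tendsto_one ε' x hx0 hlt hε1).mul_const (f₀ x)
      simpa [binCdf] using this
    · -- ε' < x : limit is 0
      have hfx : f x = 0 := Set.indicator_of_notMem (by simp [Set.mem_Iic]; exact hgt) f₀
      rw [hfx]
      have := (binCdf_tendsto_zero ε' x hε0 hgt hx1).mul_const (f₀ x)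
      simpa [binCdf] using this
end

section
/- (Inequality (13) of Lemma 1 in analytic form.) Let n, N, N_o be integers with 1 ≤ n ≤ N and N_o ≥ 1, and let ε, ε' be reals with 0 ≤ ε' ≤ ε ≤ 1 and ε' < 1. Set z := ⌊ε' N_o⌋ and f_bb(N_o, n, N+1−n; i) := C(N_o,i)·B(i+n, N_o−i+N−n+1)/B(n, N+1−n). Then ∑_{i=0}^{z} f_bb(N_o, n, N+1−n; i) · I_ε(n+i, N+N_o−n−i+1) ≥ ( 1 − I_{1−ε}(N+(1−ε')N_o−n+1, n+ε'N_o) ) · ∑_{i=0}^{z} f_bb(N_o, n, N+1−n; i), where the case ε' N_o = 0 (second parameter n) is included. Here the arguments N+(1−ε')N_o−n+1 > 0 and n+ε'N_o > 0 are reals. -/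
open MeasureTheory

/-- The beta-Binomial probability mass `f_bb(d,α,β;i) = C(d,i)·B(i+α, d−i+β)/B(α,β)`. -/
noncomputable def fbb (d a b i : ℕ) : ℝ :=
  (d.choose i : ℝ) * betaFn ((i:ℝ) + a) ((d:ℝ) - i + b) / betaFn a b

namespace Stmt6Aux

/-- The Beta integrand. -/
noncomputable def g (a b x : ℝ) : ℝ := x ^ (a - 1) * (1 - x) ^ (b - 1)

lemma g_cont {a b : ℝ} (ha : 1 ≤ a) (hb : 1 ≤ b) : Continuous (g a b) := by
  have h1 : Continuous fun x : ℝ => x ^ (a - 1) := Real.continuous_rpow_const (by linarith)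
  have h2 : Continuous fun x : ℝ => (1 - x) ^ (b - 1) :=
    (Real.continuous_rpow_const (q := b - 1) (by linarith)).comp
      (continuous_const.sub continuous_id)
  exact h1.mul h2

lemma g_intble {a b : ℝ} (ha : 1 ≤ a) (hb : 1 ≤ b) (c d : ℝ) :
    IntervalIntegrable (g a b) volume c d :=
  (g_cont ha hb).intervalIntegrable c d

lemma g_nonneg {a b x : ℝ} (hx : 0 ≤ x) (hx1 : x ≤ 1) : 0 ≤ g a b x :=
  mul_nonneg (Real.rpow_nonneg hx _) (Real.rpow_nonneg (by linarith) _)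

lemma integral_g_nonneg {a b c d : ℝ} (hc : 0 ≤ c) (hcd : c ≤ d) (hd : d ≤ 1) :
    0 ≤ ∫ x in c..d, g a b x :=
  intervalIntegral.integral_nonneg hcd fun u hu => g_nonneg (le_trans hc hu.1) (le_trans hu.2 hd)

lemma betaFn_eq (a b : ℝ) : betaFn a b = ∫ x in (0:ℝ)..1, g a b x := rfl

lemma betaFn_nonneg (a b : ℝ) : 0 ≤ betaFn a b := by
  rw [betaFn_eq]; exact integral_g_nonneg le_rfl zero_le_one le_rfl

lemma betaFn_pos {a b : ℝ} (ha : 1 ≤ a) (hb : 1 ≤ b) : 0 < betaFn a b := by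
  rw [betaFn_eq]
  apply intervalIntegral.intervalIntegral_pos_of_pos_on (g_intble ha hb 0 1)
  · intro x hx
    exact mul_pos (Real.rpow_pos_of_pos hx.1 _) (Real.rpow_pos_of_pos (by linarith [hx.2]) _)
  · norm_num

lemma fbb_nonneg (d a b i : ℕ) : 0 ≤ fbb d a b i :=
  div_nonneg (mul_nonneg (Nat.cast_nonneg _) (betaFn_nonneg _ _)) (betaFn_nonneg _ _)

/-- Pointwise estimate for `x ≤ t`. -/
lemma ptA {a a' b b' t x : ℝ} (ha' : 1 ≤ a') (haa : a' ≤ a) (hb : 1 ≤ b) (hbb : b ≤ b')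
    (hx : 0 ≤ x) (hxt : x ≤ t) (ht1 : t ≤ 1) :
    (1 - t) ^ (b' - b) * g a b x ≤ t ^ (a - a') * g a' b' x := by
  have hx1 : x ≤ 1 := le_trans hxt ht1
  have e1 : x ^ (a - 1) = x ^ (a' - 1) * x ^ (a - a') := by
    rw [← Real.rpow_add_of_nonneg hx (by linarith) (by linarith)]; ring_nf
  have e2 : (1 - x) ^ (b' - 1) = (1 - x) ^ (b - 1) * (1 - x) ^ (b' - b) := by
    rw [← Real.rpow_add_of_nonneg (by linarith : (0:ℝ) ≤ 1 - x) (by linarith) (by linarith)]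
    ring_nf
  have h1 : x ^ (a - a') ≤ t ^ (a - a') := Real.rpow_le_rpow hx hxt (by linarith)
  have h2 : (1 - t) ^ (b' - b) ≤ (1 - x) ^ (b' - b) :=
    Real.rpow_le_rpow (by linarith) (by linarith) (by linarith)
  have key : (1 - t) ^ (b' - b) * x ^ (a - a') ≤ t ^ (a - a') * (1 - x) ^ (b' - b) := by
    have := mul_le_mul h2 h1 (Real.rpow_nonneg hx _) (Real.rpow_nonneg (by linarith) _)
    linarith [this, mul_comm ((1 - x) ^ (b' - b)) (t ^ (a - a'))]
  have C0 : 0 ≤ x ^ (a' - 1) * (1 - x) ^ (b - 1) :=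
    mul_nonneg (Real.rpow_nonneg hx _) (Real.rpow_nonneg (by linarith) _)
  unfold g
  rw [e1, e2]
  calc (1 - t) ^ (b' - b) * (x ^ (a' - 1) * x ^ (a - a') * (1 - x) ^ (b - 1))
      = (x ^ (a' - 1) * (1 - x) ^ (b - 1)) * ((1 - t) ^ (b' - b) * x ^ (a - a')) := by ring
    _ ≤ (x ^ (a' - 1) * (1 - x) ^ (b - 1)) * (t ^ (a - a') * (1 - x) ^ (b' - b)) :=
        mul_le_mul_of_nonneg_left key C0
    _ = t ^ (a - a') * (x ^ (a' - 1) * ((1 - x) ^ (b - 1) * (1 - x) ^ (b' - b))) := by ring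

/-- Pointwise estimate for `t ≤ y`. -/
lemma ptB {a a' b b' t y : ℝ} (ha' : 1 ≤ a') (haa : a' ≤ a) (hb : 1 ≤ b) (hbb : b ≤ b')
    (ht0 : 0 ≤ t) (hty : t ≤ y) (hy1 : y ≤ 1) :
    t ^ (a - a') * g a' b' y ≤ (1 - t) ^ (b' - b) * g a b y := by
  have hy0 : 0 ≤ y := le_trans ht0 hty
  have e1 : y ^ (a - 1) = y ^ (a' - 1) * y ^ (a - a') := by
    rw [← Real.rpow_add_of_nonneg hy0 (by linarith) (by linarith)]; ring_nf
  have e2 : (1 - y) ^ (b' - 1) = (1 - y) ^ (b - 1) * (1 - y) ^ (b' - b) := by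
    rw [← Real.rpow_add_of_nonneg (by linarith : (0:ℝ) ≤ 1 - y) (by linarith) (by linarith)]
    ring_nf
  have h1 : t ^ (a - a') ≤ y ^ (a - a') := Real.rpow_le_rpow ht0 hty (by linarith)
  have h2 : (1 - y) ^ (b' - b) ≤ (1 - t) ^ (b' - b) :=
    Real.rpow_le_rpow (by linarith) (by linarith) (by linarith)
  have key : t ^ (a - a') * (1 - y) ^ (b' - b) ≤ (1 - t) ^ (b' - b) * y ^ (a - a') := by
    have := mul_le_mul h1 h2 (Real.rpow_nonneg (by linarith) _) (Real.rpow_nonneg hy0 _)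
    linarith [this, mul_comm (y ^ (a - a')) ((1 - t) ^ (b' - b))]
  have C0 : 0 ≤ y ^ (a' - 1) * (1 - y) ^ (b - 1) :=
    mul_nonneg (Real.rpow_nonneg hy0 _) (Real.rpow_nonneg (by linarith) _)
  unfold g
  rw [e1, e2]
  calc t ^ (a - a') * (y ^ (a' - 1) * ((1 - y) ^ (b - 1) * (1 - y) ^ (b' - b)))
      = (y ^ (a' - 1) * (1 - y) ^ (b - 1)) * (t ^ (a - a') * (1 - y) ^ (b' - b)) := by ring
    _ ≤ (y ^ (a' - 1) * (1 - y) ^ (b - 1)) * ((1 - t) ^ (b' - b) * y ^ (a - a')) :=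
        mul_le_mul_of_nonneg_left key C0
    _ = (1 - t) ^ (b' - b) * (y ^ (a' - 1) * y ^ (a - a') * (1 - y) ^ (b - 1)) := by ring

/-- Cross inequality coming from the monotone likelihood ratio. -/
lemma cross {a a' b b' : ℝ} (ha' : 1 ≤ a') (haa : a' ≤ a) (hb : 1 ≤ b) (hbb : b ≤ b')
    {t : ℝ} (ht0 : 0 ≤ t) (ht1 : t ≤ 1) :
    (∫ x in (0:ℝ)..t, g a b x) * (∫ x in t..1, g a' b' x)
      ≤ (∫ x in (0:ℝ)..t, g a' b' x) * (∫ x in t..1, g a b x) := by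
  have ha : 1 ≤ a := le_trans ha' haa
  have hb' : 1 ≤ b' := le_trans hb hbb
  rcases eq_or_lt_of_le ht0 with h0 | h0
  · simp [← h0]
  rcases eq_or_lt_of_le ht1 with h1 | h1
  · simp [h1]
  set c1 : ℝ := t ^ (a - a') with hc1
  set c2 : ℝ := (1 - t) ^ (b' - b) with hc2
  have hc1p : 0 < c1 := Real.rpow_pos_of_pos h0 _
  have hc2p : 0 < c2 := Real.rpow_pos_of_pos (by linarith) _
  have hA : c2 * ∫ x in (0:ℝ)..t, g a b x ≤ c1 * ∫ x in (0:ℝ)..t, g a' b' x := by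
    rw [← intervalIntegral.integral_const_mul, ← intervalIntegral.integral_const_mul]
    apply intervalIntegral.integral_mono_on ht0
      ((g_intble ha hb 0 t).const_mul c2) ((g_intble ha' hb' 0 t).const_mul c1)
    intro x hx
    exact ptA ha' haa hb hbb hx.1 hx.2 ht1
  have hB : c1 * ∫ x in t..1, g a' b' x ≤ c2 * ∫ x in t..1, g a b x := by
    rw [← intervalIntegral.integral_const_mul, ← intervalIntegral.integral_const_mul]
    apply intervalIntegral.integral_mono_on ht1
      ((g_intble ha' hb' t 1).const_mul c1) ((g_intble ha hb t 1).const_mul c2)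
    intro y hy
    exact ptB ha' haa hb hbb ht0 hy.1 hy.2
  have n1 : 0 ≤ ∫ x in (0:ℝ)..t, g a b x := integral_g_nonneg le_rfl ht0 ht1
  have n2 : 0 ≤ ∫ x in (0:ℝ)..t, g a' b' x := integral_g_nonneg le_rfl ht0 ht1
  have n3 : 0 ≤ ∫ x in t..1, g a' b' x := integral_g_nonneg ht0 ht1 le_rfl
  have n4 : 0 ≤ ∫ x in t..1, g a b x := integral_g_nonneg ht0 ht1 le_rfl
  have H : (c2 * ∫ x in (0:ℝ)..t, g a b x) * (c1 * ∫ x in t..1, g a' b' x)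
      ≤ (c1 * ∫ x in (0:ℝ)..t, g a' b' x) * (c2 * ∫ x in t..1, g a b x) :=
    mul_le_mul hA hB (by positivity) (by positivity)
  have H2 : (c1 * c2) * ((∫ x in (0:ℝ)..t, g a b x) * ∫ x in t..1, g a' b' x)
      ≤ (c1 * c2) * ((∫ x in (0:ℝ)..t, g a' b' x) * ∫ x in t..1, g a b x) := by
    ring_nf; ring_nf at H; linarith
  exact le_of_mul_le_mul_left H2 (by positivity)

/-- Monotonicity of the regularized incomplete Beta function in its parameters. -/
lemma regIncBeta_mono {a a' b b' : ℝ} (ha' : 1 ≤ a') (haa : a' ≤ a) (hb : 1 ≤ b) (hbb : b ≤ b')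
    {t : ℝ} (ht0 : 0 ≤ t) (ht1 : t ≤ 1) :
    regIncBeta a b t ≤ regIncBeta a' b' t := by
  have ha : 1 ≤ a := le_trans ha' haa
  have hb' : 1 ≤ b' := le_trans hb hbb
  have hB1 : 0 < betaFn a b := betaFn_pos ha hb
  have hB2 : 0 < betaFn a' b' := betaFn_pos ha' hb'
  have hs1 : (∫ x in (0:ℝ)..t, g a b x) + (∫ x in t..1, g a b x) = betaFn a b := by
    rw [betaFn_eq]
    exact intervalIntegral.integral_add_adjacent_intervals (g_intble ha hb 0 t) (g_intble ha hb t 1)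
  have hs2 : (∫ x in (0:ℝ)..t, g a' b' x) + (∫ x in t..1, g a' b' x) = betaFn a' b' := by
    rw [betaFn_eq]
    exact intervalIntegral.integral_add_adjacent_intervals
      (g_intble ha' hb' 0 t) (g_intble ha' hb' t 1)
  have hcross := cross ha' haa hb hbb ht0 ht1
  have key : (∫ x in (0:ℝ)..t, g a b x) * betaFn a' b'
      ≤ (∫ x in (0:ℝ)..t, g a' b' x) * betaFn a b := by
    rw [← hs1, ← hs2]; nlinarith [hcross]
  show (1 / betaFn a b) * (∫ x in (0:ℝ)..t, g a b x)
      ≤ (1 / betaFn a' b') * (∫ x in (0:ℝ)..t, g a' b' x)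
  rw [one_div, inv_mul_eq_div, one_div, inv_mul_eq_div, div_le_div_iff₀ hB1 hB2]
  exact key

lemma betaFn_symm (a b : ℝ) : betaFn a b = betaFn b a := by
  unfold betaFn
  have h : ∫ x in (0:ℝ)..1, x ^ (a - 1) * (1 - x) ^ (b - 1)
      = ∫ x in (0:ℝ)..1, (fun y : ℝ => y ^ (b - 1) * (1 - y) ^ (a - 1)) (1 - x) := by
    apply intervalIntegral.integral_congr
    intro x _
    simp only [sub_sub_cancel]
    ring
  rw [h, intervalIntegral.integral_comp_sub_left (fun y : ℝ => y ^ (b - 1) * (1 - y) ^ (a - 1)) 1]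
  norm_num

/-- Reflection: `1 - I_{1-ε}(a,b) = I_ε(b,a)`. -/
lemma one_sub_regIncBeta {a b ε : ℝ} (ha : 1 ≤ a) (hb : 1 ≤ b) (hε0 : 0 ≤ ε) (hε1 : ε ≤ 1) :
    1 - regIncBeta a b (1 - ε) = regIncBeta b a ε := by
  have hB : 0 < betaFn a b := betaFn_pos ha hb
  have hsplit : (∫ x in (0:ℝ)..(1 - ε), g a b x) + (∫ x in (1 - ε)..1, g a b x) = betaFn a b := by
    rw [betaFn_eq]
    exact intervalIntegral.integral_add_adjacent_intervals
      (g_intble ha hb 0 (1 - ε)) (g_intble ha hb (1 - ε) 1)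
  have hrefl : (∫ x in (0:ℝ)..ε, g b a x) = ∫ x in (1 - ε)..1, g a b x := by
    have h : ∫ x in (0:ℝ)..ε, g b a x
        = ∫ x in (0:ℝ)..ε, (fun y : ℝ => g a b y) (1 - x) := by
      apply intervalIntegral.integral_congr
      intro x _
      unfold g
      simp only [sub_sub_cancel]
      ring
    rw [h, intervalIntegral.integral_comp_sub_left (fun y : ℝ => g a b y) 1]
    norm_num
  show 1 - (1 / betaFn a b) * (∫ x in (0:ℝ)..(1 - ε), g a b x)
      = (1 / betaFn b a) * ∫ x in (0:ℝ)..ε, g b a x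
  rw [betaFn_symm b a, hrefl]
  have hBne : betaFn a b ≠ 0 := ne_of_gt hB
  field_simp
  linarith

end Stmt6Aux

open Stmt6Aux in
/-- Inequality (13) of Lemma 1 in analytic form:
`1 - H_{ε,ε'}(N,N_o) ≥ (1 - β̄_{ε,ε'}(N,N_o)) (1 - H_{1,ε'}(N,N_o))`. -/
theorem stmt6 (n N No : ℕ) (hn : 1 ≤ n) (hnN : n ≤ N) (hNo : 1 ≤ No)
    (ε ε' : ℝ) (h1 : 0 ≤ ε') (h2 : ε' ≤ ε) (h3 : ε ≤ 1) (h4 : ε' < 1) :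
    (∑ i ∈ Finset.range (⌊ε' * No⌋₊ + 1),
        fbb No n (N + 1 - n) i * regIncBeta ((n:ℝ) + i) ((N:ℝ) + No - n - i + 1) ε)
      ≥ (1 - regIncBeta ((N:ℝ) + (1 - ε') * No - n + 1) ((n:ℝ) + ε' * No) (1 - ε))
          * ∑ i ∈ Finset.range (⌊ε' * No⌋₊ + 1), fbb No n (N + 1 - n) i := by
  have hNo' : (1:ℝ) ≤ (No:ℕ) := by exact_mod_cast hNo
  have hn' : (1:ℝ) ≤ (n:ℕ) := by exact_mod_cast hn
  have hnN' : (n:ℝ) ≤ N := by exact_mod_cast hnN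
  have hε0 : 0 ≤ ε := le_trans h1 h2
  have h1A : 1 ≤ (N:ℝ) + (1 - ε') * No - n + 1 := by nlinarith
  have h1B : 1 ≤ (n:ℝ) + ε' * No := by nlinarith
  rw [ge_iff_le, Finset.mul_sum]
  apply Finset.sum_le_sum
  intro i hi
  have hi' : (i:ℝ) ≤ ε' * No := by
    have h5 : i ≤ ⌊ε' * No⌋₊ := Nat.lt_succ_iff.mp (Finset.mem_range.mp hi)
    calc (i:ℝ) ≤ (⌊ε' * No⌋₊ : ℕ) := by exact_mod_cast h5
      _ ≤ ε' * No := Nat.floor_le (by positivity)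
  rw [one_sub_regIncBeta h1A h1B hε0 h3, mul_comm]
  apply mul_le_mul_of_nonneg_left _ (fbb_nonneg _ _ _ _)
  apply regIncBeta_mono
  · -- 1 ≤ n + i
    have : (0:ℝ) ≤ (i:ℕ) := Nat.cast_nonneg i
    linarith
  · -- n + i ≤ n + ε' * No
    linarith
  · -- 1 ≤ N + (1-ε')*No - n + 1
    exact h1A
  · -- N + (1-ε')*No - n + 1 ≤ N + No - n - i + 1
    nlinarith
  · exact hε0
  · exact h3
end

section
/- (Measure-theoretic form of the GoodTrue lower bound (12) of Lemma 1.) Let n, N, N_o, z be integers with 1 ≤ n ≤ N, N_o ≥ 1 and 0 ≤ z ≤ N_o, and let ε ∈ [0,1]. Let μ be a Borel probability measure on [0,1] such that μ([0,t]) ≥ I_t(n, N+1−n) for every t ∈ [0,1]. Then ∫_{[0,ε]} ( ∑_{i=0}^{z} C(N_o,i) t^i (1−t)^{N_o−i} ) dμ(t) ≥ ∑_{i=0}^{z} f_bb(N_o, n, N+1−n; i) · I_ε(n+i, N+N_o−n−i+1). -/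
open MeasureTheory

section Aux
open Set Finset

lemma betaFn_nat (a b : ℕ) :
    betaFn ((a:ℝ)+1) ((b:ℝ)+1) = ∫ x in (0:ℝ)..1, x ^ a * (1 - x) ^ b := by
  unfold betaFn
  norm_num [Real.rpow_natCast]

lemma int_pow_pos (a b : ℕ) : 0 < ∫ x in (0:ℝ)..1, x ^ a * (1-x) ^ b :=
  intervalIntegral.intervalIntegral_pos_of_pos_on
    ((Continuous.mul (continuous_pow a) ((continuous_const.sub continuous_id).pow b)).intervalIntegrable _ _)
    (fun x hx => mul_pos (pow_pos hx.1 _) (pow_pos (by linarith [hx.2]) _)) one_pos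

lemma regIncBeta_nat (a b : ℕ) (t : ℝ) :
    regIncBeta ((a:ℝ)+1) ((b:ℝ)+1) t
      = (1 / ∫ x in (0:ℝ)..1, x ^ a * (1 - x) ^ b) * ∫ x in (0:ℝ)..t, x ^ a * (1-x) ^ b := by
  unfold regIncBeta
  rw [betaFn_nat]
  norm_num [Real.rpow_natCast]

lemma hasDerivAt_g (No m : ℕ) (t : ℝ) :
    HasDerivAt (fun t : ℝ => ∑ i ∈ range (m+1), (No.choose i : ℝ) * t^i * (1-t)^(No-i))
      (-((No:ℝ) * ((No-1).choose m) * t^m * (1-t)^(No-1-m))) t := by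
  have hsub : HasDerivAt (fun t : ℝ => 1 - t) (-1) t := by
    simpa using (hasDerivAt_id t).const_sub 1
  induction m with
  | zero =>
      have h : HasDerivAt (fun t : ℝ => (1-t)^No) (((No:ℝ) * (1-t)^(No-1)) * (-1)) t :=
        (hasDerivAt_pow No (1-t)).comp t hsub
      have he : (fun t : ℝ => ∑ i ∈ range 1, (No.choose i : ℝ) * t^i * (1-t)^(No-i))
          = fun t : ℝ => (1-t)^No := by
        funext t; simp
      rw [he]
      convert h using 1
      simp
  | succ m ih =>
      have h1 : HasDerivAt (fun t : ℝ => t^(m+1)) (((m:ℝ)+1) * t^m) t := by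
        simpa using hasDerivAt_pow (m+1) t
      have h2 : HasDerivAt (fun t : ℝ => (1-t)^(No-(m+1)))
          ((((No-(m+1):ℕ):ℝ) * (1-t)^(No-(m+1)-1)) * (-1)) t :=
        (hasDerivAt_pow (No-(m+1)) (1-t)).comp t hsub
      have hterm := (h1.mul h2).const_mul ((No.choose (m+1) : ℝ))
      simp only [Pi.mul_apply] at hterm
      rw [show (fun y:ℝ => (No.choose (m+1):ℝ) * (y^(m+1) * (1-y)^(No-(m+1))))
            = (fun y:ℝ => (No.choose (m+1):ℝ) * y^(m+1) * (1-y)^(No-(m+1)))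
          from funext fun y => by ring] at hterm
      have hsum := ih.add hterm
      simp only [Pi.add_def] at hsum
      have hfe : (fun t : ℝ => ∑ i ∈ range (m+2), (No.choose i : ℝ) * t^i * (1-t)^(No-i))
          = fun t : ℝ => (∑ i ∈ range (m+1), (No.choose i : ℝ) * t^i * (1-t)^(No-i))
              + (No.choose (m+1) : ℝ) * t^(m+1) * (1-t)^(No-(m+1)) := by
        funext t; rw [Finset.sum_range_succ]
      rw [hfe]
      refine hsum.congr_deriv (Eq.symm ?_)
      rcases le_or_gt (m+1) No with hle | hlt
      · obtain ⟨k, rfl⟩ : ∃ k, No = m + 1 + k := ⟨No - (m+1), by omega⟩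
        have e0 : m + 1 + k - 1 = m + k := by omega
        have e1 : m + 1 + k - (m + 1) = k := by omega
        have e2 : m + k - m = k := by omega
        have e3 : m + k - (m + 1) = k - 1 := by omega
        simp only [e0, e1, e2, e3]
        have c1 : ((m+1+k).choose (m+1)) * (m+1) = (m+1+k) * ((m+k).choose m) := by
          have h := Nat.add_one_mul_choose_eq (m+k) m
          rw [show m+1+k = m+k+1 from by omega]
          exact h.symm
        have c2 : ((m+1+k).choose (m+1)) * k = (m+1+k) * ((m+k).choose (m+1)) := by
          have h1' := Nat.add_one_mul_choose_eq (m+k) (m+1)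
          have h2' := Nat.choose_succ_right_eq (m+1+k) (m+1)
          rw [show m+1+k-(m+1) = k from by omega] at h2'
          rw [show m+1+k = m+k+1 from by omega] at h2' ⊢
          rw [← h2', ← h1']
        have c1' : (((m+1+k).choose (m+1)) : ℝ) * ((m:ℝ)+1) = ((m:ℝ)+1+k) * ((m+k).choose m) := by
          exact_mod_cast congrArg (Nat.cast : ℕ → ℝ) c1
        have c2' : (((m+1+k).choose (m+1)) : ℝ) * (k:ℝ) = ((m:ℝ)+1+k) * ((m+k).choose (m+1)) := by
          exact_mod_cast congrArg (Nat.cast : ℕ → ℝ) c2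
        push_cast
        linear_combination (-(t^m*(1-t)^k)) * c1' + (t^(m+1)*(1-t)^(k-1)) * c2'
      · have z3 : No.choose (m+1) = 0 := Nat.choose_eq_zero_of_lt (by omega)
        rw [z3]
        rcases Nat.eq_zero_or_pos No with rfl | h0
        · norm_num
        · have z1 : (No-1).choose m = 0 := Nat.choose_eq_zero_of_lt (by omega)
          have z2 : (No-1).choose (m+1) = 0 := Nat.choose_eq_zero_of_lt (by omega)
          rw [z1, z2]
          norm_num

lemma g_cont (No z : ℕ) :
    Continuous (fun t : ℝ => ∑ i ∈ range (z+1), (No.choose i : ℝ) * t^i * (1-t)^(No-i)) := by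
  apply continuous_finset_sum
  intro i _
  exact (continuous_const.mul (continuous_pow i)).mul
    ((continuous_const.sub continuous_id).pow _)

lemma g_anti (No z : ℕ) :
    AntitoneOn (fun t : ℝ => ∑ i ∈ range (z+1), (No.choose i : ℝ) * t^i * (1-t)^(No-i))
      (Icc (0:ℝ) 1) := by
  apply antitoneOn_of_deriv_nonpos (convex_Icc 0 1) (g_cont No z).continuousOn
  · intro x _
    exact (hasDerivAt_g No z x).differentiableAt.differentiableWithinAt
  · intro x hx
    rw [interior_Icc] at hx
    rw [(hasDerivAt_g No z x).deriv]
    have h1 : (0:ℝ) ≤ x := hx.1.le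
    have h2 : (0:ℝ) ≤ 1 - x := by linarith [hx.2]
    simp only [neg_nonpos]
    positivity

lemma g_nonneg (No z : ℕ) {t : ℝ} (ht : t ∈ Icc (0:ℝ) 1) :
    0 ≤ ∑ i ∈ range (z+1), (No.choose i : ℝ) * t^i * (1-t)^(No-i) := by
  apply Finset.sum_nonneg
  intro i _
  have h1 : (0:ℝ) ≤ t := ht.1
  have h2 : (0:ℝ) ≤ 1 - t := by linarith [ht.2]
  positivity

end Aux

open Set

/-- Measure-theoretic form of the GoodTrue lower bound (12) of Lemma 1. -/
theorem stmt8 (n N No z : ℕ) (hn : 1 ≤ n) (hnN : n ≤ N) (hNo : 1 ≤ No) (hz : z ≤ No)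
    (ε : ℝ) (hε : ε ∈ Set.Icc (0:ℝ) 1)
    (μ : Measure ℝ) [IsProbabilityMeasure μ] (hsupp : μ (Set.Icc (0:ℝ) 1) = 1)
    (hdom : ∀ t ∈ Set.Icc (0:ℝ) 1,
      regIncBeta n ((N:ℝ) + 1 - n) t ≤ (μ (Set.Icc 0 t)).toReal) :
    (∑ i ∈ Finset.range (z + 1),
        fbb No n (N + 1 - n) i * regIncBeta ((n:ℝ) + i) ((N:ℝ) + No - n - i + 1) ε)
      ≤ ∫ t in Set.Icc (0:ℝ) ε,
          (∑ i ∈ Finset.range (z + 1),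
            (No.choose i : ℝ) * t ^ i * (1 - t) ^ (No - i)) ∂μ := by
  obtain ⟨m, rfl⟩ : ∃ m, n = m + 1 := ⟨n - 1, by omega⟩
  obtain ⟨b, rfl⟩ : ∃ b, N = (m + 1) + b := ⟨N - (m+1), by omega⟩
  obtain ⟨hε0, hε1⟩ := hε
  set g : ℝ → ℝ := fun t => ∑ i ∈ Finset.range (z+1), (No.choose i : ℝ) * t^i * (1-t)^(No-i)
    with hgdef
  set B0 : ℝ := ∫ x in (0:ℝ)..1, x^m * (1-x)^b with hB0
  have hB0pos : 0 < B0 := int_pow_pos m b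
  set dens : ℝ → ℝ := fun x => x^m * (1-x)^b / B0 with hdensdef
  have hdens_cont : Continuous dens := by
    rw [hdensdef]
    exact ((continuous_pow m).mul ((continuous_const.sub continuous_id).pow b)).div_const _
  -- the normalized incomplete beta as a function
  set F : ℝ → ℝ := fun c => (1/B0) * ∫ x in (0:ℝ)..c, x^m * (1-x)^b with hFdef
  have hregF : ∀ c : ℝ,
      regIncBeta (↑(m+1)) ((↑((m+1)+b):ℝ) + 1 - ↑(m+1)) c = F c := by
    intro c
    rw [show ((↑((m+1)+b):ℝ) + 1 - ↑(m+1)) = (b:ℝ)+1 from by push_cast; ring,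
      show ((↑(m+1):ℝ)) = (m:ℝ)+1 from by push_cast; ring,
      regIncBeta_nat, hFdef, hB0]
  -- Step 1 : the LHS sum equals a beta-weighted interval integral of g
  have step1 : ∀ i ∈ Finset.range (z+1),
      fbb No (m+1) ((m+1)+b+1-(m+1)) i
        * regIncBeta ((↑(m+1):ℝ) + ↑i) ((↑((m+1)+b):ℝ) + ↑No - ↑(m+1) - ↑i + 1) ε
      = (No.choose i : ℝ) * ((1/B0) * ∫ x in (0:ℝ)..ε, x^(m+i) * (1-x)^(b+(No-i))) := by
    intro i hi
    have hiNo : i ≤ No := le_trans (Nat.lt_succ_iff.mp (Finset.mem_range.mp hi)) hz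
    have hBipos : 0 < ∫ x in (0:ℝ)..1, x^(m+i) * (1-x)^(b+(No-i)) := int_pow_pos _ _
    have hfbb : fbb No (m+1) ((m+1)+b+1-(m+1)) i
        = (No.choose i : ℝ) * (∫ x in (0:ℝ)..1, x^(m+i)*(1-x)^(b+(No-i))) / B0 := by
      unfold fbb
      rw [show ((m+1)+b+1-(m+1) : ℕ) = b+1 from by omega]
      rw [show ((i:ℝ) + ((m+1:ℕ):ℝ)) = ((m+i:ℕ):ℝ)+1 from by push_cast; ring]
      rw [show ((No:ℝ) - (i:ℝ) + ((b+1:ℕ):ℝ)) = ((b+(No-i):ℕ):ℝ)+1 from by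
        push_cast [Nat.cast_sub hiNo]; ring]
      rw [betaFn_nat]
      rw [show ((m+1:ℕ):ℝ) = (m:ℝ)+1 from by push_cast; ring,
        show ((b+1:ℕ):ℝ) = (b:ℝ)+1 from by push_cast; ring, betaFn_nat, ← hB0]
    have hreg : regIncBeta ((↑(m+1):ℝ) + ↑i) ((↑((m+1)+b):ℝ) + ↑No - ↑(m+1) - ↑i + 1) ε
        = (1 / ∫ x in (0:ℝ)..1, x^(m+i)*(1-x)^(b+(No-i)))
            * ∫ x in (0:ℝ)..ε, x^(m+i)*(1-x)^(b+(No-i)) := by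
      rw [show ((↑(m+1):ℝ) + ↑i) = ((m+i:ℕ):ℝ)+1 from by push_cast; ring,
        show ((↑((m+1)+b):ℝ) + ↑No - ↑(m+1) - ↑i + 1) = ((b+(No-i):ℕ):ℝ)+1 from by
          push_cast [Nat.cast_sub hiNo]; ring,
        regIncBeta_nat]
    rw [hfbb, hreg]
    field_simp
  have hLHS : (∑ i ∈ Finset.range (z + 1),
        fbb No (m+1) ((m+1)+b+1-(m+1)) i
          * regIncBeta ((↑(m+1):ℝ) + ↑i) ((↑((m+1)+b):ℝ) + ↑No - ↑(m+1) - ↑i + 1) ε)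
      = (1/B0) * ∫ x in (0:ℝ)..ε, g x * (x^m * (1-x)^b) := by
    rw [Finset.sum_congr rfl step1]
    have hint : ∀ i ∈ Finset.range (z+1),
        IntervalIntegrable (fun x : ℝ => (No.choose i : ℝ) * (x^(m+i) * (1-x)^(b+(No-i))))
          volume 0 ε := by
      intro i _
      exact (continuous_const.mul ((continuous_pow _).mul
        ((continuous_const.sub continuous_id).pow _))).intervalIntegrable _ _
    calc ∑ i ∈ Finset.range (z+1),
          (No.choose i : ℝ) * ((1/B0) * ∫ x in (0:ℝ)..ε, x^(m+i) * (1-x)^(b+(No-i)))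
        = (1/B0) * ∑ i ∈ Finset.range (z+1),
            ∫ x in (0:ℝ)..ε, (No.choose i : ℝ) * (x^(m+i) * (1-x)^(b+(No-i))) := by
          rw [Finset.mul_sum]
          apply Finset.sum_congr rfl
          intro i _
          rw [intervalIntegral.integral_const_mul]
          ring
      _ = (1/B0) * ∫ x in (0:ℝ)..ε, ∑ i ∈ Finset.range (z+1),
            (No.choose i : ℝ) * (x^(m+i) * (1-x)^(b+(No-i))) := by
          congr 1
          exact (intervalIntegral.integral_finset_sum hint).symm
      _ = (1/B0) * ∫ x in (0:ℝ)..ε, g x * (x^m * (1-x)^b) := by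
          congr 1
          apply intervalIntegral.integral_congr
          intro x _
          show ∑ i ∈ Finset.range (z+1), (No.choose i : ℝ) * (x^(m+i) * (1-x)^(b+(No-i)))
              = g x * (x^m * (1-x)^b)
          simp only [hgdef, Finset.sum_mul]
          apply Finset.sum_congr rfl
          intro i _
          rw [pow_add, pow_add]
          ring
  -- the beta measure
  set ν : Measure ℝ :=
    (volume.restrict (Icc (0:ℝ) 1)).withDensity (fun x => ENNReal.ofReal (dens x)) with hν
  have hdens_nonneg : ∀ x ∈ Icc (0:ℝ) 1, 0 ≤ dens x := by
    intro x hx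
    rw [hdensdef]
    have h1 : (0:ℝ) ≤ x := hx.1
    have h2 : (0:ℝ) ≤ 1 - x := by linarith [hx.2]
    positivity
  have hνIcc : ∀ c, 0 ≤ c → c ≤ 1 → ν (Icc 0 c) = ENNReal.ofReal (F c) := by
    intro c h0 h1
    rw [hν, withDensity_apply _ measurableSet_Icc,
      Measure.restrict_restrict measurableSet_Icc,
      Set.inter_eq_left.mpr (Icc_subset_Icc le_rfl h1)]
    rw [← ofReal_integral_eq_lintegral_ofReal (hdens_cont.integrableOn_Icc)]
    · congr 1
      rw [integral_Icc_eq_integral_Ioc, ← intervalIntegral.integral_of_le h0, hFdef, hdensdef]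
      simp only []
      rw [intervalIntegral.integral_div]
      ring
    · filter_upwards [ae_restrict_mem measurableSet_Icc] with x hx
      exact hdens_nonneg x ⟨hx.1, le_trans hx.2 h1⟩
  -- lintegral of g against ν over [0, ε]
  have hgmble : Measurable g := (g_cont No z).measurable
  have hLν : ∫⁻ t in Icc (0:ℝ) ε, ENNReal.ofReal (g t) ∂ν
      = ENNReal.ofReal ((1/B0) * ∫ x in (0:ℝ)..ε, g x * (x^m * (1-x)^b)) := by
    rw [hν, restrict_withDensity measurableSet_Icc,
      Measure.restrict_restrict measurableSet_Icc,
      Set.inter_eq_left.mpr (Icc_subset_Icc le_rfl hε1)]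
    rw [lintegral_withDensity_eq_lintegral_mul _
      (hdens_cont.measurable.ennreal_ofReal) (hgmble.ennreal_ofReal)]
    have hcongr : ∀ᵐ x ∂(volume.restrict (Icc (0:ℝ) ε)),
        ((fun x => ENNReal.ofReal (dens x)) * fun t => ENNReal.ofReal (g t)) x
          = ENNReal.ofReal (dens x * g x) := by
      filter_upwards [ae_restrict_mem measurableSet_Icc] with x hx
      have := hdens_nonneg x ⟨hx.1, le_trans hx.2 hε1⟩
      simp [ENNReal.ofReal_mul this]
    rw [lintegral_congr_ae hcongr]
    rw [← ofReal_integral_eq_lintegral_ofReal]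
    · congr 1
      rw [integral_Icc_eq_integral_Ioc, ← intervalIntegral.integral_of_le hε0]
      rw [show (1/B0) * (∫ x in (0:ℝ)..ε, g x * (x^m * (1-x)^b))
            = ∫ x in (0:ℝ)..ε, (g x * (x^m * (1-x)^b))/B0 from by
          rw [intervalIntegral.integral_div]; ring]
      apply intervalIntegral.integral_congr
      intro x _
      rw [hdensdef]
      simp only []
      ring
    · exact (hdens_cont.mul (g_cont No z)).integrableOn_Icc
    · filter_upwards [ae_restrict_mem measurableSet_Icc] with x hx
      have hx1 : x ∈ Icc (0:ℝ) 1 := ⟨hx.1, le_trans hx.2 hε1⟩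
      exact mul_nonneg (hdens_nonneg x hx1) (g_nonneg No z hx1)
  -- layer cake comparison
  have hgnn_μ : 0 ≤ᵐ[μ.restrict (Icc (0:ℝ) ε)] g := by
    filter_upwards [ae_restrict_mem measurableSet_Icc] with x hx
    exact g_nonneg No z ⟨hx.1, le_trans hx.2 hε1⟩
  have hgnn_ν : 0 ≤ᵐ[ν.restrict (Icc (0:ℝ) ε)] g := by
    filter_upwards [ae_restrict_mem measurableSet_Icc] with x hx
    exact g_nonneg No z ⟨hx.1, le_trans hx.2 hε1⟩
  have hcomp : ∀ s : ℝ,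
      (ν.restrict (Icc (0:ℝ) ε)) {a | s ≤ g a} ≤ (μ.restrict (Icc (0:ℝ) ε)) {a | s ≤ g a} := by
    intro s
    have hset : MeasurableSet {a : ℝ | s ≤ g a} := measurableSet_le measurable_const hgmble
    rw [Measure.restrict_apply hset, Measure.restrict_apply hset]
    rcases Set.eq_empty_or_nonempty ({a : ℝ | s ≤ g a} ∩ Icc 0 ε) with h | h
    · rw [h]; simp
    · have hclosed : IsClosed ({a : ℝ | s ≤ g a} ∩ Icc 0 ε) :=
        (isClosed_le continuous_const (g_cont No z)).inter isClosed_Icc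
      have hbdd : BddAbove ({a : ℝ | s ≤ g a} ∩ Icc 0 ε) :=
        (bddAbove_Icc).mono Set.inter_subset_right
      set c := sSup ({a : ℝ | s ≤ g a} ∩ Icc 0 ε) with hc
      have hcA : c ∈ {a : ℝ | s ≤ g a} ∩ Icc 0 ε := hclosed.csSup_mem h hbdd
      have hcIcc : c ∈ Icc (0:ℝ) ε := hcA.2
      have hc1 : c ∈ Icc (0:ℝ) 1 := ⟨hcIcc.1, le_trans hcIcc.2 hε1⟩
      have hAeq : {a : ℝ | s ≤ g a} ∩ Icc 0 ε = Icc 0 c := by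
        apply Set.Subset.antisymm
        · intro t ht
          exact ⟨ht.2.1, le_csSup hbdd ht⟩
        · intro t ht
          have ht1 : t ∈ Icc (0:ℝ) 1 := ⟨ht.1, le_trans (le_trans ht.2 hcIcc.2) hε1⟩
          exact ⟨le_trans hcA.1 (g_anti No z ht1 hc1 ht.2), ht.1, le_trans ht.2 hcIcc.2⟩
      rw [hAeq, hνIcc c hcIcc.1 hc1.2]
      have hd := hdom c hc1
      rw [hregF] at hd
      calc ENNReal.ofReal (F c) ≤ ENNReal.ofReal ((μ (Icc 0 c)).toReal) :=
            ENNReal.ofReal_le_ofReal hd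
        _ = μ (Icc 0 c) := ENNReal.ofReal_toReal (measure_ne_top μ _)
  have hLL : ∫⁻ t in Icc (0:ℝ) ε, ENNReal.ofReal (g t) ∂ν
      ≤ ∫⁻ t in Icc (0:ℝ) ε, ENNReal.ofReal (g t) ∂μ := by
    rw [lintegral_eq_lintegral_meas_le _ hgnn_ν hgmble.aemeasurable,
      lintegral_eq_lintegral_meas_le _ hgnn_μ hgmble.aemeasurable]
    exact lintegral_mono fun s => hcomp s
  -- convert the RHS
  have hgint : IntegrableOn g (Icc (0:ℝ) ε) μ :=
    (g_cont No z).continuousOn.integrableOn_compact isCompact_Icc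
  have hRHS : ∫ t in Icc (0:ℝ) ε, g t ∂μ
      = (∫⁻ t in Icc (0:ℝ) ε, ENNReal.ofReal (g t) ∂μ).toReal := by
    rw [integral_eq_lintegral_of_nonneg_ae hgnn_μ hgint.1]
  have hfin : ∫⁻ t in Icc (0:ℝ) ε, ENNReal.ofReal (g t) ∂μ ≠ ⊤ := by
    refine ne_of_lt (lt_of_le_of_lt (lintegral_mono fun a => ?_) hgint.2)
    rw [← ofReal_norm_eq_enorm]
    exact ENNReal.ofReal_le_ofReal (le_abs_self _)
  rw [hLHS, hRHS]
  rw [← ENNReal.ofReal_le_iff_le_toReal hfin]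
  rw [← hLν]
  exact hLL
end

section
/- (Measure-theoretic form of the BadTrue upper bound (14) of Lemma 1.) Let n, N, N_o be integers with 1 ≤ n ≤ N and N_o ≥ 1, let ε ∈ [0,1], and let ε' ∈ [0,1) with z := ⌊ε' N_o⌋ < N_o. Let μ be a Borel probability measure on [0,1] such that μ([0,t]) ≥ I_t(n, N+1−n) for every t ∈ [0,1]. Then ∫_{(ε,1]} ( ∑_{i=0}^{z} C(N_o,i) t^i (1−t)^{N_o−i} ) dμ(t) ≤ I_{1−ε}((1−ε')N_o, ε'N_o + 1) · I_{1−ε}(N+1−n, n), where the first factor uses the regularized incomplete Beta function with real parameters (1−ε')N_o > 0 and ε'N_o + 1 > 0. -/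
open MeasureTheory

namespace Stmt9Aux

open intervalIntegral Real Set

/-- The Beta integrand. -/
noncomputable def bint (a b x : ℝ) : ℝ := x ^ (a - 1) * (1 - x) ^ (b - 1)

lemma cont_one_sub_rpow {d : ℝ} (hd : 0 ≤ d) : Continuous fun u : ℝ => (1 - u) ^ d :=
  (Real.continuous_rpow_const hd).comp (continuous_const.sub continuous_id)

lemma bint_integrable {a b : ℝ} (ha : 0 < a) (hb : 1 ≤ b) (p q : ℝ) :
    IntervalIntegrable (bint a b) volume p q := by
  have h1 : IntervalIntegrable (fun u : ℝ => u ^ (a - 1)) volume p q :=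
    intervalIntegrable_rpow' (by linarith)
  exact h1.mul_continuousOn (cont_one_sub_rpow (by linarith : (0:ℝ) ≤ b - 1)).continuousOn

lemma bint_pos {a b u : ℝ} (h0 : 0 < u) (h1 : u < 1) : 0 < bint a b u :=
  mul_pos (Real.rpow_pos_of_pos h0 _) (Real.rpow_pos_of_pos (by linarith) _)

lemma bint_nonneg {a b u : ℝ} (h0 : 0 ≤ u) (h1 : u ≤ 1) : 0 ≤ bint a b u :=
  mul_nonneg (Real.rpow_nonneg h0 _) (Real.rpow_nonneg (by linarith) _)

lemma betaFn_split {a b : ℝ} (ha : 0 < a) (hb : 1 ≤ b) (x : ℝ) :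
    betaFn a b = (∫ u in (0:ℝ)..x, bint a b u) + ∫ u in x..(1:ℝ), bint a b u :=
  (integral_add_adjacent_intervals (bint_integrable ha hb 0 x)
    (bint_integrable ha hb x 1)).symm

lemma tail_pos {a b x : ℝ} (ha : 0 < a) (hb : 1 ≤ b) (hx0 : 0 ≤ x) (hx1 : x < 1) :
    0 < ∫ u in x..(1:ℝ), bint a b u :=
  intervalIntegral_pos_of_pos_on (bint_integrable ha hb x 1)
    (fun u hu => bint_pos (lt_of_le_of_lt hx0 hu.1) hu.2) hx1

lemma head_nonneg {a b x : ℝ} (hx0 : 0 ≤ x) (hx1 : x ≤ 1) :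
    0 ≤ ∫ u in (0:ℝ)..x, bint a b u :=
  integral_nonneg hx0 fun u hu => bint_nonneg hu.1 (le_trans hu.2 hx1)

lemma tail_nonneg {a b x : ℝ} (hx0 : 0 ≤ x) (hx1 : x ≤ 1) :
    0 ≤ ∫ u in x..(1:ℝ), bint a b u :=
  integral_nonneg hx1 fun u hu => bint_nonneg (le_trans hx0 hu.1) hu.2

lemma betaFn_pos {a b : ℝ} (ha : 0 < a) (hb : 1 ≤ b) : 0 < betaFn a b := by
  have := tail_pos ha hb (le_refl (0:ℝ)) one_pos
  simpa [betaFn, bint] using this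

lemma regIncBeta_eq {a b t : ℝ} :
    regIncBeta a b t = (1 / betaFn a b) * ∫ u in (0:ℝ)..t, bint a b u := rfl

lemma swap_integral (a b t : ℝ) :
    (∫ u in t..(1:ℝ), bint a b u) = ∫ u in (0:ℝ)..(1 - t), bint b a u := by
  have h := integral_comp_sub_left (a := (0:ℝ)) (b := 1 - t) (bint a b) 1
  simp only [sub_sub_cancel, sub_zero] at h
  rw [← h]
  congr 1
  funext x
  simp only [bint, sub_sub_cancel]
  ring

lemma betaFn_comm (a b : ℝ) : betaFn a b = betaFn b a := by
  have h := swap_integral a b 0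
  simp only [sub_zero] at h
  simpa [betaFn, bint] using h

lemma regIncBeta_compl {a b : ℝ} (ha : 1 ≤ a) (hb : 1 ≤ b) {t : ℝ} :
    regIncBeta b a (1 - t) = 1 - regIncBeta a b t := by
  have ha0 : (0:ℝ) < a := by linarith
  have hb0 : (0:ℝ) < b := by linarith
  have hsplit := betaFn_split ha0 hb t
  have hBpos := betaFn_pos ha0 hb
  have hswap := swap_integral a b t
  rw [regIncBeta_eq, regIncBeta_eq, betaFn_comm b a, ← hswap]
  field_simp
  linarith [hsplit]

lemma ftc_pow (a b : ℕ) (ha : 1 ≤ a) (s : ℝ) :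
    ∫ u in (0:ℝ)..s, ((a:ℝ) * u ^ (a - 1) * (1 - u) ^ b - (b:ℝ) * u ^ a * (1 - u) ^ (b - 1))
      = s ^ a * (1 - s) ^ b := by
  have key : ∀ u : ℝ, HasDerivAt (fun v : ℝ => v ^ a * (1 - v) ^ b)
      ((a:ℝ) * u ^ (a - 1) * (1 - u) ^ b - (b:ℝ) * u ^ a * (1 - u) ^ (b - 1)) u := by
    intro u
    have h1 : HasDerivAt (fun v : ℝ => v ^ a) ((a:ℝ) * u ^ (a - 1)) u := hasDerivAt_pow a u
    have h2 : HasDerivAt (fun v : ℝ => (1 - v) ^ b) (-((b:ℝ) * (1 - u) ^ (b - 1))) u := by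
      have h3 := (hasDerivAt_pow b (1 - u)).comp u ((hasDerivAt_const u (1:ℝ)).sub (hasDerivAt_id u))
      simpa [Function.comp_def] using h3
    have : HasDerivAt (fun v : ℝ => v ^ a * (1 - v) ^ b)
        ((a:ℝ) * u ^ (a - 1) * (1 - u) ^ b + u ^ a * -((b:ℝ) * (1 - u) ^ (b - 1))) u := h1.mul h2
    convert this using 1
    ring
  rw [intervalIntegral.integral_eq_sub_of_hasDerivAt (fun u _ => key u)
    (by apply Continuous.intervalIntegrable; fun_prop)]
  simp [zero_pow (by omega : a ≠ 0)]

lemma sum_eq_integral (n : ℕ) (z : ℕ) (hzn : z < n) (t : ℝ) :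
    ∑ i ∈ Finset.range (z + 1), (n.choose i : ℝ) * t ^ i * (1 - t) ^ (n - i)
      = ((n - z : ℕ) : ℝ) * (n.choose z : ℝ) *
          ∫ u in (0:ℝ)..(1 - t), u ^ (n - z - 1) * (1 - u) ^ z := by
  induction z with
  | zero =>
    simp only [zero_add, Finset.sum_range_one, Nat.choose_zero_right, Nat.cast_one, pow_zero,
      Nat.sub_zero, one_mul, mul_one]
    rw [integral_pow]
    have hn1 : n - 1 + 1 = n := by omega
    rw [hn1]
    have hn0 : (n:ℝ) ≠ 0 := by positivity
    rw [zero_pow (by omega : n ≠ 0)]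
    field_simp
    rw [sub_zero, ← Nat.cast_succ, Nat.succ_eq_add_one, hn1]; ring
  | succ z ih =>
    have hz : z < n := by omega
    have ihz := ih hz
    obtain ⟨a, ha'⟩ : ∃ a, a = n - z - 1 := ⟨_, rfl⟩
    have ha1 : 1 ≤ a := by omega
    have g1 : n - (z + 1) = a := by omega
    have g2 : n - (z + 1) - 1 = a - 1 := by omega
    have g3 : n - z = a + 1 := by omega
    rw [← ha'] at ihz
    rw [g3] at ihz
    rw [Finset.sum_range_succ, ihz, g1]
    have E := ftc_pow a (z + 1) ha1 (1 - t)
    simp only [Nat.add_sub_cancel, sub_sub_cancel] at E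
    have i1 : IntervalIntegrable (fun u : ℝ => (a:ℝ) * (u ^ (a - 1) * (1 - u) ^ (z + 1))) volume 0 (1 - t) := by
      apply Continuous.intervalIntegrable; fun_prop
    have i2 : IntervalIntegrable (fun u : ℝ => ((z:ℝ) + 1) * (u ^ a * (1 - u) ^ z)) volume 0 (1 - t) := by
      apply Continuous.intervalIntegrable; fun_prop
    have E' : ((a:ℝ) * ∫ u in (0:ℝ)..(1 - t), u ^ (a - 1) * (1 - u) ^ (z + 1))
        - (((z:ℝ) + 1) * ∫ u in (0:ℝ)..(1 - t), u ^ a * (1 - u) ^ z)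
        = (1 - t) ^ a * t ^ (z + 1) := by
      rw [← intervalIntegral.integral_const_mul, ← intervalIntegral.integral_const_mul,
        ← intervalIntegral.integral_sub i1 i2]
      rw [← E]
      congr 1; funext u; push_cast; ring
    have hchoose : ((n.choose (z + 1) : ℕ):ℝ) * ((z:ℝ) + 1) = ((n.choose z : ℕ):ℝ) * ((a:ℝ) + 1) := by
      have h2 : (n.choose (z + 1) * (z + 1) : ℕ) = (n.choose z * (n - z) : ℕ) :=
        Nat.choose_succ_right_eq n z
      rw [g3] at h2
      exact_mod_cast congrArg (fun k : ℕ => (k : ℝ)) h2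
    push_cast
    push_cast at ihz E' hchoose
    linear_combination (-(n.choose (z + 1) : ℝ)) * E' -
      (∫ u in (0:ℝ)..(1 - t), u ^ a * (1 - u) ^ z) * hchoose

lemma ratio_identity {a' b' c : ℝ} (m z : ℕ) (hm : 1 ≤ m)
    (hca : a' - 1 = ((m:ℝ) - 1) - c) (hcb : b' - 1 = (z:ℝ) + c)
    {u : ℝ} (hu0 : 0 < u) (hu1 : u < 1) :
    bint a' b' u = (u ^ (m - 1) * (1 - u) ^ z) * ((1 - u) / u) ^ c := by
  have h1u : (0:ℝ) < 1 - u := by linarith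
  rw [bint, hca, hcb]
  rw [Real.rpow_sub hu0, Real.rpow_add h1u]
  rw [Real.div_rpow (le_of_lt h1u) (le_of_lt hu0)]
  rw [show ((m:ℝ) - 1) = ((m - 1 : ℕ):ℝ) by push_cast [Nat.cast_sub hm]; ring]
  rw [Real.rpow_natCast, show ((z:ℝ)) = ((z:ℕ):ℝ) from rfl, Real.rpow_natCast]
  have huc : u ^ c ≠ 0 := ne_of_gt (Real.rpow_pos_of_pos hu0 c)
  field_simp

lemma ratio_mono {c u v : ℝ} (hc : 0 ≤ c) (hu : 0 < u) (huv : u ≤ v) (hv : v < 1) :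
    ((1 - v) / v) ^ c ≤ ((1 - u) / u) ^ c := by
  apply Real.rpow_le_rpow (div_nonneg (by linarith) (by linarith))
  · rw [div_le_div_iff₀ (by linarith) hu]
    nlinarith
  · exact hc

lemma key_compare (m z : ℕ) (hm : 1 ≤ m) (a' b' : ℝ)
    (ha0 : 0 < a') (hc0 : 0 ≤ (m:ℝ) - a') (hcb : b' - 1 = (z:ℝ) + ((m:ℝ) - a'))
    {x : ℝ} (hx0 : 0 < x) (hx1 : x < 1) :
    (∫ u in (0:ℝ)..x, u ^ (m - 1) * (1 - u) ^ z)
      ≤ (∫ u in (0:ℝ)..(1:ℝ), u ^ (m - 1) * (1 - u) ^ z) * regIncBeta a' b' x := by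
  set c : ℝ := (m:ℝ) - a' with hc
  have hca : a' - 1 = ((m:ℝ) - 1) - c := by rw [hc]; ring
  have hz0 : (0:ℝ) ≤ (z:ℝ) := Nat.cast_nonneg z
  have hb1 : 1 ≤ b' := by linarith
  set f : ℝ → ℝ := fun u : ℝ => u ^ (m - 1) * (1 - u) ^ z with hf
  have hfcont : Continuous f := by rw [hf]; fun_prop
  have hfnn : ∀ u : ℝ, 0 ≤ u → u ≤ 1 → 0 ≤ f u := fun u h0 h1 =>
    mul_nonneg (pow_nonneg h0 _) (pow_nonneg (by linarith) _)
  set r : ℝ := ((1 - x) / x) ^ c with hr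
  have hrpos : 0 < r := Real.rpow_pos_of_pos (div_pos (by linarith) hx0) c
  set Af : ℝ := ∫ u in (0:ℝ)..x, f u with hAf
  set Bf : ℝ := ∫ u in x..(1:ℝ), f u with hBf
  set Ag : ℝ := ∫ u in (0:ℝ)..x, bint a' b' u with hAg
  set Bg : ℝ := ∫ u in x..(1:ℝ), bint a' b' u with hBg
  have hAf0 : 0 ≤ Af := integral_nonneg hx0.le fun u hu => hfnn u hu.1 (le_trans hu.2 hx1.le)
  have hBf0 : 0 ≤ Bf := integral_nonneg hx1.le fun u hu => hfnn u (le_trans hx0.le hu.1) hu.2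
  have h1 : r * Af ≤ Ag := by
    rw [hAf, hAg, intervalIntegral.integral_of_le hx0.le, intervalIntegral.integral_of_le hx0.le,
      ← MeasureTheory.integral_const_mul]
    apply MeasureTheory.setIntegral_mono_on
    · exact (IntervalIntegrable.const_mul (hfcont.intervalIntegrable 0 x) r).1
    · exact (bint_integrable ha0 hb1 0 x).1
    · exact measurableSet_Ioc
    · intro u hu
      have hu1 : u < 1 := lt_of_le_of_lt hu.2 hx1
      rw [ratio_identity m z hm hca hcb hu.1 hu1]
      have := ratio_mono (c := c) (by linarith) hu.1 hu.2 hx1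
      have hfu : 0 ≤ f u := hfnn u hu.1.le hu1.le
      calc r * f u ≤ ((1 - u) / u) ^ c * f u :=
            mul_le_mul_of_nonneg_right this hfu
        _ = f u * ((1 - u) / u) ^ c := by ring
  have h2 : Bg ≤ r * Bf := by
    rw [hBf, hBg, intervalIntegral.integral_of_le hx1.le, intervalIntegral.integral_of_le hx1.le,
      ← MeasureTheory.integral_const_mul]
    apply MeasureTheory.setIntegral_mono_on
    · exact (bint_integrable ha0 hb1 x 1).1
    · exact (IntervalIntegrable.const_mul (hfcont.intervalIntegrable x 1) r).1
    · exact measurableSet_Ioc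
    · intro u hu
      rcases lt_or_eq_of_le hu.2 with hu1 | hu1
      · rw [ratio_identity m z hm hca hcb (lt_trans hx0 hu.1) hu1]
        have hmono : ((1 - u) / u) ^ c ≤ r := ratio_mono (by linarith) hx0 hu.1.le hu1
        have hfu : 0 ≤ f u := hfnn u (le_trans hx0.le hu.1.le) hu1.le
        calc f u * ((1 - u) / u) ^ c ≤ f u * r := mul_le_mul_of_nonneg_left hmono hfu
          _ = r * f u := by ring
      · subst hu1
        rcases eq_or_lt_of_le (by linarith : (1:ℝ) ≤ b') with hb | hb
        · -- b' = 1, hence z = 0 and c = 0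
          have hz : (z:ℝ) = 0 := by linarith
          have hcz : c = 0 := by linarith
          have hznat : z = 0 := by exact_mod_cast hz
          rw [bint, ← hb]
          simp [hznat, hcz, hf, hr, Real.rpow_zero]
        · rw [bint]
          have : ((1:ℝ) - 1) ^ (b' - 1) = 0 := by
            rw [show (1:ℝ) - 1 = 0 by ring, Real.zero_rpow (by linarith : b' - 1 ≠ 0)]
          rw [this, mul_zero]
          exact mul_nonneg hrpos.le (hfnn 1 (by linarith) le_rfl)
  have hsplitf : (∫ u in (0:ℝ)..(1:ℝ), f u) = Af + Bf :=
    (integral_add_adjacent_intervals (hfcont.intervalIntegrable 0 x)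
      (hfcont.intervalIntegrable x 1)).symm
  have hsplitg : betaFn a' b' = Ag + Bg := betaFn_split ha0 hb1 x
  have hBgpos : 0 < Bg := tail_pos ha0 hb1 hx0.le hx1
  have hAg0 : 0 ≤ Ag := head_nonneg hx0.le hx1.le
  have hDpos : 0 < Ag + Bg := by linarith
  have hkey : Af * (Ag + Bg) ≤ (Af + Bf) * Ag := by
    have k1 : Af * Bg ≤ Af * (r * Bf) := mul_le_mul_of_nonneg_left h2 hAf0
    have k2 : (r * Af) * Bf ≤ Ag * Bf := mul_le_mul_of_nonneg_right h1 hBf0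
    nlinarith
  rw [regIncBeta_eq, hsplitg, hsplitf, ← hAg]
  show Af ≤ (Af + Bf) * ((1 / (Ag + Bg)) * Ag)
  rw [show (Af + Bf) * ((1 / (Ag + Bg)) * Ag) = ((Af + Bf) * Ag) / (Ag + Bg) by ring]
  rw [le_div_iff₀ hDpos]
  exact hkey

end Stmt9Aux

open Stmt9Aux intervalIntegral in
/-- Measure-theoretic form of the BadTrue upper bound (14) of Lemma 1. -/
theorem stmt9 (n N No : ℕ) (hn : 1 ≤ n) (hnN : n ≤ N) (hNo : 1 ≤ No)
    (ε : ℝ) (hε : ε ∈ Set.Icc (0:ℝ) 1)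
    (ε' : ℝ) (hε' : ε' ∈ Set.Ico (0:ℝ) 1) (hz : ⌊ε' * No⌋₊ < No)
    (μ : Measure ℝ) [IsProbabilityMeasure μ] (hsupp : μ (Set.Icc (0:ℝ) 1) = 1)
    (hdom : ∀ t ∈ Set.Icc (0:ℝ) 1,
      regIncBeta n ((N:ℝ) + 1 - n) t ≤ (μ (Set.Icc 0 t)).toReal) :
    (∫ t in Set.Ioc ε 1,
        (∑ i ∈ Finset.range (⌊ε' * No⌋₊ + 1),
          (No.choose i : ℝ) * t ^ i * (1 - t) ^ (No - i)) ∂μ)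
      ≤ regIncBeta ((1 - ε') * No) (ε' * No + 1) (1 - ε)
          * regIncBeta ((N:ℝ) + 1 - n) n (1 - ε) := by
  by_cases hε1 : ε = 1
  · subst hε1
    simp [regIncBeta, Set.Ioc_self]
  have hεlt : ε < 1 := lt_of_le_of_ne hε.2 hε1
  have hε0 : (0:ℝ) ≤ ε := hε.1
  set z : ℕ := ⌊ε' * (No:ℝ)⌋₊ with hzdef
  set F : ℝ → ℝ := fun t : ℝ =>
    ∑ i ∈ Finset.range (z + 1), (No.choose i : ℝ) * t ^ i * (1 - t) ^ (No - i) with hFdef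
  have hFcont : Continuous F := by
    apply continuous_finset_sum
    intro i _
    fun_prop
  have hFnn : ∀ t : ℝ, 0 ≤ t → t ≤ 1 → 0 ≤ F t := by
    intro t h0 h1
    apply Finset.sum_nonneg
    intro i _
    have : (0:ℝ) ≤ 1 - t := by linarith
    positivity
  -- basic real facts
  have hNopos : (0:ℝ) < (No:ℝ) := by exact_mod_cast hNo
  have hzle : (z:ℝ) ≤ ε' * No := Nat.floor_le (mul_nonneg hε'.1 hNopos.le)
  set m : ℕ := No - z with hmdef
  have hm : 1 ≤ m := by omega
  have hmcast : ((m:ℕ):ℝ) = (No:ℝ) - (z:ℝ) := by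
    rw [hmdef]; push_cast [Nat.cast_sub hz.le]; ring
  set a' : ℝ := (1 - ε') * No with ha'def
  set b' : ℝ := ε' * No + 1 with hb'def
  have ha0 : 0 < a' := mul_pos (by linarith [hε'.2]) hNopos
  have hc0 : 0 ≤ (m:ℝ) - a' := by rw [hmcast, ha'def]; nlinarith
  have hcb : b' - 1 = (z:ℝ) + ((m:ℝ) - a') := by rw [hmcast, ha'def, hb'def]; ring
  have hb1 : 1 ≤ b' := by rw [hb'def]; nlinarith
  set f : ℝ → ℝ := fun u : ℝ => u ^ (m - 1) * (1 - u) ^ z with hfdef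
  have hfcont : Continuous f := by rw [hfdef]; fun_prop
  have hfnn : ∀ u : ℝ, 0 ≤ u → u ≤ 1 → 0 ≤ f u := by
    intro u h0 h1
    have : (0:ℝ) ≤ 1 - u := by linarith
    positivity
  set K : ℝ := ((No - z : ℕ):ℝ) * (No.choose z : ℝ) with hKdef
  have hK0 : 0 ≤ K := mul_nonneg (Nat.cast_nonneg _) (Nat.cast_nonneg _)
  have hident : ∀ t : ℝ, F t = K * ∫ u in (0:ℝ)..(1 - t), f u := fun t =>
    sum_eq_integral No z hz t
  -- F 0 = 1 and the normalization K * ∫₀¹ f = 1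
  have hF0 : F 0 = 1 := by
    show (∑ i ∈ Finset.range (z + 1), (No.choose i : ℝ) * (0:ℝ) ^ i * (1 - (0:ℝ)) ^ (No - i)) = 1
    rw [Finset.sum_eq_single 0]
    · simp
    · intro i _ hi; simp [zero_pow hi]
    · intro h; exact absurd (Finset.mem_range.2 (by omega)) h
  have hK1 : K * (∫ u in (0:ℝ)..(1:ℝ), f u) = 1 := by
    have := hident 0
    rw [hF0] at this
    simpa using this.symm
  -- F is bounded by F ε on (ε, 1]
  have hFmono : ∀ t ∈ Set.Ioc ε 1, F t ≤ F ε := by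
    intro t ht
    rw [hident t, hident ε]
    apply mul_le_mul_of_nonneg_left _ hK0
    have hadd : (∫ u in (0:ℝ)..(1 - t), f u) + (∫ u in (1 - t)..(1 - ε), f u)
        = ∫ u in (0:ℝ)..(1 - ε), f u :=
      integral_add_adjacent_intervals (hfcont.intervalIntegrable _ _)
        (hfcont.intervalIntegrable _ _)
    have hnn : 0 ≤ ∫ u in (1 - t)..(1 - ε), f u := by
      apply integral_nonneg (by linarith [ht.1] : 1 - t ≤ 1 - ε)
      intro u hu
      exact hfnn u (le_trans (by linarith [ht.2]) hu.1) (le_trans hu.2 (by linarith))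
    linarith
  -- Step 1 : the μ-integral is at most F ε * μ(Ioc ε 1)
  have hFint : IntegrableOn F (Set.Ioc ε 1) μ :=
    (hFcont.continuousOn.integrableOn_compact isCompact_Icc).mono_set Set.Ioc_subset_Icc_self
  have step1 : (∫ t in Set.Ioc ε 1, F t ∂μ) ≤ F ε * (μ (Set.Ioc ε 1)).toReal := by
    have := MeasureTheory.setIntegral_mono_on hFint
      (MeasureTheory.integrableOn_const (measure_ne_top μ _))
      measurableSet_Ioc hFmono
    rwa [MeasureTheory.setIntegral_const, smul_eq_mul, mul_comm] at this
  -- Step 2 : μ(Ioc ε 1) ≤ I_{1-ε}(N+1-n, n)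
  have hμIoc : (μ (Set.Ioc ε 1)).toReal ≤ regIncBeta ((N:ℝ) + 1 - n) n (1 - ε) := by
    have hdisj : Disjoint (Set.Icc (0:ℝ) ε) (Set.Ioc ε 1) := by
      rw [Set.disjoint_left]
      intro a ha1 ha2
      exact absurd ha1.2 (not_le.2 ha2.1)
    have hunion := Set.Icc_union_Ioc_eq_Icc hε0 hε.2
    have hmeas : μ (Set.Icc 0 ε) + μ (Set.Ioc ε 1) = 1 := by
      rw [← measure_union hdisj measurableSet_Ioc, hunion, hsupp]
    have htr := congrArg ENNReal.toReal hmeas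
    rw [ENNReal.toReal_add (measure_ne_top μ _) (measure_ne_top μ _), ENNReal.toReal_one] at htr
    have hcompl : regIncBeta ((N:ℝ) + 1 - n) n (1 - ε)
        = 1 - regIncBeta n ((N:ℝ) + 1 - n) ε := by
      apply regIncBeta_compl
      · exact_mod_cast hn
      · have : (n:ℝ) ≤ (N:ℝ) := by exact_mod_cast hnN
        linarith
    have := hdom ε ⟨hε0, hε.2⟩
    rw [hcompl]
    linarith
  -- Step 3 : F ε ≤ I_{1-ε}((1-ε')No, ε'No + 1)
  have step3 : F ε ≤ regIncBeta a' b' (1 - ε) := by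
    rcases eq_or_lt_of_le hε0 with hε0' | hε0'
    · -- ε = 0
      rw [← hε0']
      have hone : regIncBeta a' b' (1 - 0) = 1 := by
        have : regIncBeta a' b' 1 = (1 / betaFn a' b') * betaFn a' b' := rfl
        rw [show (1:ℝ) - 0 = 1 by ring, this]
        field_simp [ne_of_gt (betaFn_pos ha0 hb1)]
      rw [hone, hF0]
    · have hkey := key_compare m z hm a' b' ha0 hc0 hcb (x := 1 - ε)
        (by linarith) (by linarith)
      rw [hident ε]
      calc K * ∫ u in (0:ℝ)..(1 - ε), f u
          ≤ K * ((∫ u in (0:ℝ)..(1:ℝ), f u) * regIncBeta a' b' (1 - ε)) :=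
            mul_le_mul_of_nonneg_left hkey hK0
        _ = (K * ∫ u in (0:ℝ)..(1:ℝ), f u) * regIncBeta a' b' (1 - ε) := by ring
        _ = regIncBeta a' b' (1 - ε) := by rw [hK1, one_mul]
  -- nonnegativity facts for combining
  have hI1nn : 0 ≤ regIncBeta a' b' (1 - ε) := by
    rw [regIncBeta_eq]
    exact mul_nonneg (le_of_lt (div_pos one_pos (betaFn_pos ha0 hb1)))
      (head_nonneg (by linarith) (by linarith))
  -- combine
  calc (∫ t in Set.Ioc ε 1, F t ∂μ)
      ≤ F ε * (μ (Set.Ioc ε 1)).toReal := step1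
    _ ≤ regIncBeta a' b' (1 - ε) * regIncBeta ((N:ℝ) + 1 - n) n (1 - ε) :=
        mul_le_mul step3 hμIoc ENNReal.toReal_nonneg hI1nn
end

section
/- (Explicit sample-size bound, eq. (4): sufficiency of N ≥ (2/ε)(ln β⁻¹ + n − 1) for the scenario bound.) Let ε ∈ (0,1), β ∈ (0,1), let n ≥ 1 be an integer, and let N be an integer with N ≥ (2/ε)(ln(1/β) + n − 1). Then the lower binomial tail satisfies ∑_{i=0}^{n−1} C(N,i) ε^i (1−ε)^{N−i} ≤ β; equivalently, ∑_{i=n}^{N} C(N,i) ε^i (1−ε)^{N−i} ≥ 1 − β. -/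
/-- Explicit sample-size bound, eq. (4): if `N ≥ (2/ε)(ln β⁻¹ + n − 1)` then the
lower binomial tail satisfies `∑_{i=0}^{n−1} C(N,i) ε^i (1−ε)^{N−i} ≤ β`;
equivalently `∑_{i=n}^{N} C(N,i) ε^i (1−ε)^{N−i} ≥ 1 − β`. -/
theorem stmt14 (ε β : ℝ) (hε : ε ∈ Set.Ioo (0:ℝ) 1) (hβ : β ∈ Set.Ioo (0:ℝ) 1)
    (n : ℕ) (hn : 1 ≤ n) (N : ℕ)
    (hN : (2 / ε) * (Real.log (1 / β) + n - 1) ≤ (N : ℝ)) :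
    (∑ i ∈ Finset.range n, (N.choose i : ℝ) * ε ^ i * (1 - ε) ^ (N - i)) ≤ β ∧
    1 - β ≤ ∑ i ∈ Finset.Icc n N, (N.choose i : ℝ) * ε ^ i * (1 - ε) ^ (N - i) := by
  obtain ⟨hε0, hε1⟩ := hε
  obtain ⟨hβ0, hβ1⟩ := hβ
  have hL : 0 < Real.log (1 / β) := Real.log_pos (by rw [lt_div_iff₀ hβ0]; linarith)
  have h2ε : (1:ℝ) < 2 / ε := by rw [lt_div_iff₀ hε0]; linarith
  have hn1 : (0:ℝ) ≤ (n:ℝ) - 1 := by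
    have : (1:ℝ) ≤ (n:ℝ) := by exact_mod_cast hn
    linarith
  -- N ≥ n
  have hNn' : (n:ℝ) - 1 < (N:ℝ) := by
    have h1 : ((n:ℝ) - 1) ≤ (2 / ε) * ((n:ℝ) - 1) := le_mul_of_one_le_left hn1 h2ε.le
    have h2 : (2 / ε) * Real.log (1 / β) > 0 :=
      mul_pos (lt_trans one_pos h2ε) hL
    nlinarith [hN]
  have hnN : n ≤ N := by
    have h : (n:ℝ) < (N:ℝ) + 1 := by linarith
    have : n < N + 1 := by exact_mod_cast h
    omega
  -- key exponential inequality
  have hkey : Real.exp ((n:ℝ) - 1 - (N:ℝ) * ε / 2) ≤ β := by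
    have hmul : Real.log (1 / β) + (n:ℝ) - 1 ≤ (N:ℝ) * ε / 2 := by
      have := mul_le_mul_of_nonneg_right hN (le_of_lt (half_pos hε0))
      have hne : ε ≠ 0 := ne_of_gt hε0
      field_simp at this
      nlinarith [this]
    have hlog : (n:ℝ) - 1 - (N:ℝ) * ε / 2 ≤ Real.log β := by
      rw [Real.log_div one_ne_zero (ne_of_gt hβ0), Real.log_one] at hmul
      linarith
    calc Real.exp ((n:ℝ) - 1 - (N:ℝ) * ε / 2) ≤ Real.exp (Real.log β) :=
          Real.exp_le_exp.mpr hlog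
      _ = β := Real.exp_log hβ0
  have h1ε : (0:ℝ) ≤ 1 - ε := by linarith
  -- term nonnegativity
  have hterm : ∀ i, 0 ≤ (N.choose i : ℝ) * (ε / 2) ^ i * (1 - ε) ^ (N - i) := by
    intro i
    positivity
  -- step 1: bound partial sum by 2^(n-1) times partial sum with ε/2
  have step1 : (∑ i ∈ Finset.range n, (N.choose i : ℝ) * ε ^ i * (1 - ε) ^ (N - i))
      ≤ (2:ℝ) ^ (n - 1) *
        ∑ i ∈ Finset.range n, (N.choose i : ℝ) * (ε / 2) ^ i * (1 - ε) ^ (N - i) := by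
    rw [Finset.mul_sum]
    apply Finset.sum_le_sum
    intro i hi
    have hi' : i ≤ n - 1 := Nat.le_pred_of_lt (Finset.mem_range.mp hi)
    have h2i : (2:ℝ) ^ i ≤ (2:ℝ) ^ (n - 1) := pow_le_pow_right₀ one_le_two hi'
    have hhalf : (2:ℝ) ^ i * (ε / 2) ^ i = ε ^ i := by
      rw [← mul_pow]; congr 1; ring
    have heq : (N.choose i : ℝ) * ε ^ i * (1 - ε) ^ (N - i)
        = (2:ℝ) ^ i * ((N.choose i : ℝ) * (ε / 2) ^ i * (1 - ε) ^ (N - i)) := by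
      rw [← hhalf]; ring
    rw [heq]
    exact mul_le_mul_of_nonneg_right h2i (hterm i)
  -- step 2: extend to full binomial sum
  have step2 : (∑ i ∈ Finset.range n, (N.choose i : ℝ) * (ε / 2) ^ i * (1 - ε) ^ (N - i))
      ≤ (1 - ε / 2) ^ N := by
    have hext : (∑ i ∈ Finset.range n, (N.choose i : ℝ) * (ε / 2) ^ i * (1 - ε) ^ (N - i))
        ≤ ∑ i ∈ Finset.range (N + 1), (N.choose i : ℝ) * (ε / 2) ^ i * (1 - ε) ^ (N - i) :=
      Finset.sum_le_sum_of_subset_of_nonneg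
        (Finset.range_subset_range.mpr (by omega))
        (fun i _ _ => hterm i)
    have hbinom : (∑ i ∈ Finset.range (N + 1), (N.choose i : ℝ) * (ε / 2) ^ i * (1 - ε) ^ (N - i))
        = (1 - ε / 2) ^ N := by
      have := add_pow (ε / 2) (1 - ε) N
      have h : (ε / 2 + (1 - ε)) = 1 - ε / 2 := by ring
      rw [h] at this
      rw [this]
      apply Finset.sum_congr rfl
      intro i _
      ring
    linarith
  -- step 3: bound 2^(n-1) (1 - ε/2)^N by exp
  have step3 : (2:ℝ) ^ (n - 1) * (1 - ε / 2) ^ N ≤ Real.exp ((n:ℝ) - 1 - (N:ℝ) * ε / 2) := by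
    have h2e : (2:ℝ) ^ (n - 1) ≤ Real.exp 1 ^ (n - 1) := by
      apply pow_le_pow_left₀ (by norm_num)
      have := Real.add_one_le_exp (1:ℝ)
      linarith
    have h1e : (1 - ε / 2) ^ N ≤ Real.exp (-(ε / 2)) ^ N := by
      apply pow_le_pow_left₀ (by linarith)
      have := Real.add_one_le_exp (-(ε / 2))
      linarith
    have hmul : (2:ℝ) ^ (n - 1) * (1 - ε / 2) ^ N
        ≤ Real.exp 1 ^ (n - 1) * Real.exp (-(ε / 2)) ^ N := by
      exact mul_le_mul h2e h1e (pow_nonneg (by linarith) N) (by positivity)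
    have heq : Real.exp 1 ^ (n - 1) * Real.exp (-(ε / 2)) ^ N
        = Real.exp ((n:ℝ) - 1 - (N:ℝ) * ε / 2) := by
      rw [← Real.exp_nat_mul, ← Real.exp_nat_mul, ← Real.exp_add]
      congr 1
      have : ((n - 1 : ℕ) : ℝ) = (n:ℝ) - 1 := by
        push_cast [Nat.cast_sub hn]; ring
      rw [this]; ring
    linarith [heq ▸ hmul]
  have main : (∑ i ∈ Finset.range n, (N.choose i : ℝ) * ε ^ i * (1 - ε) ^ (N - i)) ≤ β := by
    have h2pos : (0:ℝ) ≤ (2:ℝ) ^ (n - 1) := by positivity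
    calc (∑ i ∈ Finset.range n, (N.choose i : ℝ) * ε ^ i * (1 - ε) ^ (N - i))
        ≤ (2:ℝ) ^ (n - 1) *
          ∑ i ∈ Finset.range n, (N.choose i : ℝ) * (ε / 2) ^ i * (1 - ε) ^ (N - i) := step1
      _ ≤ (2:ℝ) ^ (n - 1) * (1 - ε / 2) ^ N := mul_le_mul_of_nonneg_left step2 h2pos
      _ ≤ Real.exp ((n:ℝ) - 1 - (N:ℝ) * ε / 2) := step3
      _ ≤ β := hkey
  refine ⟨main, ?_⟩
  -- total sum equals 1
  have htot : (∑ i ∈ Finset.range (N + 1), (N.choose i : ℝ) * ε ^ i * (1 - ε) ^ (N - i)) = 1 := by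
    calc (∑ i ∈ Finset.range (N + 1), (N.choose i : ℝ) * ε ^ i * (1 - ε) ^ (N - i))
        = ∑ i ∈ Finset.range (N + 1), ε ^ i * (1 - ε) ^ (N - i) * (N.choose i : ℝ) :=
          Finset.sum_congr rfl (fun i _ => by ring)
      _ = (ε + (1 - ε)) ^ N := (add_pow ε (1 - ε) N).symm
      _ = 1 := by norm_num
  have hsplit : (∑ i ∈ Finset.range n, (N.choose i : ℝ) * ε ^ i * (1 - ε) ^ (N - i))
      + (∑ i ∈ Finset.Ico n (N + 1), (N.choose i : ℝ) * ε ^ i * (1 - ε) ^ (N - i))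
      = ∑ i ∈ Finset.range (N + 1), (N.choose i : ℝ) * ε ^ i * (1 - ε) ^ (N - i) :=
    Finset.sum_range_add_sum_Ico _ (by omega)
  rw [← Finset.Ico_add_one_right_eq_Icc]
  linarith
end
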